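/- arXiv:2404.03597 — 15 statements merged into one kernel-verified Lean document; each statement's English description precedes it below -/
import Mathlib

section
/- Let (X, u) be an ultrametric space whose value set Γ is linearly ordered (with smallest element ⊥), and let (X, 𝓑_u) be its ultrametric ball space of precise balls. Then (X, 𝓑_u) is chain union stable, i.e., the ball space (X, cu(𝓑_u)) is chain union closed. -/
open Set

section BasicDefs

variable {X : Type*}

/-- `cu 𝓑` is the family of all unions of nonempty inclusion-chains contained in `𝓑`. -/
def cu (B : Set (Set X)) : Set (Set X) :=
  {U | ∃ C : Set (Set X), C ⊆ B ∧ C.Nonempty ∧ IsChain (· ⊆ ·) C ∧ U = ⋃₀ C}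

/-- A family of balls is chain union closed if it coincides with its family of chain unions. -/
def ChainUnionClosed (B : Set (Set X)) : Prop := cu B = B

/-- A ball space is chain union stable if `cu 𝓑` is chain union closed. -/
def ChainUnionStable (B : Set (Set X)) : Prop := ChainUnionClosed (cu B)

/-- Spherical completeness: every nonempty chain of balls has nonempty intersection. -/
def SphericallyComplete (B : Set (Set X)) : Prop :=
  ∀ C : Set (Set X), C ⊆ B → C.Nonempty → IsChain (· ⊆ ·) C → (⋂₀ C).Nonempty

/-- A ball space: a nonempty collection of nonempty subsets (of a nonempty set `X`). -/
def IsBallSpace (B : Set (Set X)) : Prop := B.Nonempty ∧ ∀ S ∈ B, S.Nonempty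

end BasicDefs

section UltraDefs

variable {X : Type*} {Γ : Type*}

/-- An ultrametric on `X` with values in a poset `Γ` with bottom element `⊥`:
(U1) `u x y = ⊥ ↔ x = y`, (U2) the ultrametric triangle law, (U3) symmetry. -/
def IsUltrametric [PartialOrder Γ] [OrderBot Γ] (u : X → X → Γ) : Prop :=
  (∀ x y, u x y = ⊥ ↔ x = y) ∧
  (∀ x y z γ, u x y ≤ γ → u y z ≤ γ → u x z ≤ γ) ∧
  (∀ x y, u x y = u y x)

/-- The precise ultrametric ball `B(x,y) = {z | u x z ≤ u x y}`. -/
def uball [PartialOrder Γ] (u : X → X → Γ) (x y : X) : Set X :=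
  {z | u x z ≤ u x y}

/-- The ultrametric ball space: the family of all precise balls. -/
def uballSpace [PartialOrder Γ] (u : X → X → Γ) : Set (Set X) :=
  {B | ∃ x y, B = uball u x y}

end UltraDefs

/-- Theorem 1.3(1): the ball space of an ultrametric space with linearly ordered value set
is chain union stable. -/
theorem ultrametric_linearOrder_chainUnionStable {X Γ : Type*} [Nonempty X]
    [LinearOrder Γ] [OrderBot Γ] (u : X → X → Γ) (hu : IsUltrametric u) :
    ChainUnionStable (uballSpace u) := by
  obtain ⟨hbot, htri, hsym⟩ := hu
  -- any two intersecting precise balls are comparable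
  have hhalf : ∀ (x1 y1 x2 y2 : X), u x1 y1 ≤ u x2 y2 →
      (uball u x1 y1 ∩ uball u x2 y2).Nonempty →
      uball u x1 y1 ⊆ uball u x2 y2 := by
    intro x1 y1 x2 y2 hle ⟨z, hz1, hz2⟩ w hw
    have h1 : u z w ≤ u x1 y1 := by
      apply htri z x1 w (u x1 y1)
      · rw [hsym]; exact hz1
      · exact hw
    exact htri x2 z w (u x2 y2) hz2 (h1.trans hle)
  have hcomp : ∀ b1 b2, b1 ∈ uballSpace u → b2 ∈ uballSpace u →
      (b1 ∩ b2).Nonempty → b1 ⊆ b2 ∨ b2 ⊆ b1 := by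
    rintro _ _ ⟨x1, y1, rfl⟩ ⟨x2, y2, rfl⟩ hne
    rcases le_total (u x1 y1) (u x2 y2) with h | h
    · exact Or.inl (hhalf _ _ _ _ h hne)
    · exact Or.inr (hhalf _ _ _ _ h ⟨hne.choose, hne.choose_spec.2, hne.choose_spec.1⟩)
  unfold ChainUnionStable ChainUnionClosed
  apply subset_antisymm
  · rintro W ⟨D, hDsub, ⟨U0, hU0⟩, hDchain, rfl⟩
    obtain ⟨C0, hC0sub, ⟨b0, hb0⟩, hC0chain, hU0eq⟩ := hDsub hU0
    obtain ⟨x0, hx0b0⟩ : b0.Nonempty := by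
      obtain ⟨x, y, rfl⟩ := hC0sub hb0
      exact ⟨x, by simp [uball, (hbot x x).mpr rfl]⟩
    refine ⟨{b | b ∈ uballSpace u ∧ x0 ∈ b ∧ b ⊆ ⋃₀ D}, fun b hb => hb.1, ?_, ?_, ?_⟩
    · exact ⟨b0, hC0sub hb0, hx0b0,
        (hU0eq ▸ subset_sUnion_of_mem hb0).trans (subset_sUnion_of_mem hU0)⟩
    · intro a ha b hb _
      exact hcomp a b ha.1 hb.1 ⟨x0, ha.2.1, hb.2.1⟩
    · apply subset_antisymm
      · rintro p ⟨U1, hU1, hpU1⟩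
        -- find U ∈ D containing both x0 and p
        have hx0U0 : x0 ∈ U0 := hU0eq ▸ ⟨b0, hb0, hx0b0⟩
        obtain ⟨U, hU, hx0U, hpU⟩ : ∃ U ∈ D, x0 ∈ U ∧ p ∈ U := by
          rcases eq_or_ne U0 U1 with rfl | hne
          · exact ⟨U0, hU0, hx0U0, hpU1⟩
          · rcases hDchain hU0 hU1 hne with h | h
            · exact ⟨U1, hU1, h hx0U0, hpU1⟩
            · exact ⟨U0, hU0, hx0U0, h hpU1⟩
        obtain ⟨CU, hCUsub, _, hCUchain, rfl⟩ := hDsub hU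
        obtain ⟨bx, hbx, hx0bx⟩ := hx0U
        obtain ⟨bp, hbp, hpbp⟩ := hpU
        obtain ⟨b, hb, hx0b, hpb⟩ : ∃ b ∈ CU, x0 ∈ b ∧ p ∈ b := by
          rcases eq_or_ne bx bp with rfl | hne
          · exact ⟨bx, hbx, hx0bx, hpbp⟩
          · rcases hCUchain hbx hbp hne with h | h
            · exact ⟨bp, hbp, h hx0bx, hpbp⟩
            · exact ⟨bx, hbx, hx0bx, h hpbp⟩
        exact ⟨b, ⟨hCUsub hb, hx0b,
          (subset_sUnion_of_mem hb).trans (subset_sUnion_of_mem hU)⟩, hpb⟩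
      · rintro p ⟨b, hb, hpb⟩
        exact hb.2.2 hpb
  · intro W hW
    exact ⟨{W}, by simpa using hW, singleton_nonempty W, Set.Subsingleton.isChain (Set.subsingleton_singleton), by simp⟩
end

section
/- Let (X, u) be an ultrametric space whose value set Γ is linearly ordered (with smallest element ⊥), and let (X, 𝓑_u) be its ultrametric ball space of precise balls. If (X, 𝓑_u) is spherically complete, then so is (X, cu(𝓑_u)). -/
open Set

section Aux

variable {X Γ : Type*} [LinearOrder Γ] [OrderBot Γ] {u : X → X → Γ}

lemma mem_uball_self (hu : IsUltrametric u) (x y : X) : x ∈ uball u x y := by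
  simp only [uball, mem_setOf_eq, (hu.1 x x).mpr rfl, bot_le]

lemma uball_recenter (hu : IsUltrametric u) {x y z : X} (hz : z ∈ uball u x y) :
    uball u x y = {w | u z w ≤ u x y} := by
  obtain ⟨h1, h2, h3⟩ := hu
  ext w
  simp only [uball, mem_setOf_eq] at *
  constructor
  · intro hw
    exact h2 z x w (u x y) (by rw [h3]; exact hz) hw
  · intro hw
    exact h2 x z w (u x y) hz hw

lemma uball_comp (hu : IsUltrametric u) {B1 B2 : Set X} (h1 : B1 ∈ uballSpace u)
    (h2 : B2 ∈ uballSpace u) {z : X} (hz1 : z ∈ B1) (hz2 : z ∈ B2) :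
    B1 ⊆ B2 ∨ B2 ⊆ B1 := by
  obtain ⟨x1, y1, rfl⟩ := h1
  obtain ⟨x2, y2, rfl⟩ := h2
  rw [uball_recenter hu hz1, uball_recenter hu hz2]
  rcases le_total (u x1 y1) (u x2 y2) with h | h
  · exact Or.inl fun w hw => le_trans hw h
  · exact Or.inr fun w hw => le_trans hw h

lemma cu_mem_nonempty (hu : IsUltrametric u) {U : Set X} (hU : U ∈ cu (uballSpace u)) :
    U.Nonempty := by
  obtain ⟨C, hCB, ⟨B, hB⟩, _, rfl⟩ := hU
  obtain ⟨x, y, rfl⟩ := hCB hB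
  exact ⟨x, mem_sUnion.2 ⟨_, hB, mem_uball_self hu x y⟩⟩

lemma cu_pair_ball (hu : IsUltrametric u) {U : Set X} (hU : U ∈ cu (uballSpace u))
    {z w : X} (hz : z ∈ U) (hw : w ∈ U) :
    ∃ B ∈ uballSpace u, z ∈ B ∧ w ∈ B ∧ B ⊆ U := by
  obtain ⟨C, hCB, _, hchain, rfl⟩ := hU
  obtain ⟨B1, hB1C, hzB1⟩ := mem_sUnion.1 hz
  obtain ⟨B2, hB2C, hwB2⟩ := mem_sUnion.1 hw
  rcases hchain.total hB1C hB2C with h | h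
  · exact ⟨B2, hCB hB2C, h hzB1, hwB2, fun v hv => mem_sUnion.2 ⟨B2, hB2C, hv⟩⟩
  · exact ⟨B1, hCB hB1C, hzB1, h hwB2, fun v hv => mem_sUnion.2 ⟨B1, hB1C, hv⟩⟩

end Aux

/-- Theorem 1.3(2): if the ball space of an ultrametric space with linearly ordered value set
is spherically complete, then so is its chain union closure `cu (𝓑_u)`. -/
theorem ultrametric_linearOrder_cu_sphericallyComplete {X Γ : Type*} [Nonempty X]
    [LinearOrder Γ] [OrderBot Γ] (u : X → X → Γ) (hu : IsUltrametric u)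
    (hsc : SphericallyComplete (uballSpace u)) :
    SphericallyComplete (cu (uballSpace u)) := by
  intro D hD hDne hDchain
  by_cases hmin : ∃ U0 ∈ D, ∀ U ∈ D, U0 ⊆ U
  · obtain ⟨U0, hU0, hminU⟩ := hmin
    obtain ⟨x, hx⟩ := cu_mem_nonempty hu (hD hU0)
    exact ⟨x, fun U hU => hminU U hU hx⟩
  · push_neg at hmin
    -- key: every U ∈ D contains a ball that itself contains some member of D
    have key : ∀ U ∈ D, ∃ B ∈ uballSpace u, B ⊆ U ∧ ∃ V ∈ D, V ⊆ B := by
      intro U hU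
      obtain ⟨V, hVD, hnsub⟩ := hmin U hU
      have hVU : V ⊆ U := by
        rcases eq_or_ne V U with rfl | hne
        · exact subset_rfl
        · rcases hDchain hVD hU hne with h | h
          · exact h
          · exact absurd h hnsub
      obtain ⟨w, hwU, hwV⟩ := not_subset.1 hnsub
      obtain ⟨z, hzV⟩ := cu_mem_nonempty hu (hD hVD)
      obtain ⟨B, hB, hzB, hwB, hBU⟩ := cu_pair_ball hu (hD hU) (hVU hzV) hwU
      refine ⟨B, hB, hBU, V, hVD, fun v hv => ?_⟩
      obtain ⟨B', hB', hzB', hvB', hB'V⟩ := cu_pair_ball hu (hD hVD) hzV hv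
      rcases uball_comp hu hB hB' hzB hzB' with h | h
      · exact absurd (hB'V (h hwB)) hwV
      · exact h hvB'
    set C : Set (Set X) := {B | B ∈ uballSpace u ∧ ∃ V ∈ D, V ⊆ B} with hC
    have hCsub : C ⊆ uballSpace u := fun B hB => hB.1
    have hCne : C.Nonempty := by
      obtain ⟨U, hU⟩ := hDne
      obtain ⟨B, hB, _, V, hVD, hVB⟩ := key U hU
      exact ⟨B, hB, V, hVD, hVB⟩
    have hCchain : IsChain (· ⊆ ·) C := by
      intro B1 h1 B2 h2 _
      obtain ⟨hB1, V1, hV1D, hV1B⟩ := h1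
      obtain ⟨hB2, V2, hV2D, hV2B⟩ := h2
      have hV12 : V1 ⊆ V2 ∨ V2 ⊆ V1 := by
        rcases eq_or_ne V1 V2 with rfl | hne
        · exact Or.inl subset_rfl
        · exact hDchain hV1D hV2D hne
      rcases hV12 with h | h
      · obtain ⟨z, hz⟩ := cu_mem_nonempty hu (hD hV1D)
        exact uball_comp hu hB1 hB2 (hV1B hz) (hV2B (h hz))
      · obtain ⟨z, hz⟩ := cu_mem_nonempty hu (hD hV2D)
        exact uball_comp hu hB1 hB2 (hV1B (h hz)) (hV2B hz)
    obtain ⟨x, hx⟩ := hsc C hCsub hCne hCchain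
    refine ⟨x, fun U hU => ?_⟩
    obtain ⟨B, hB, hBU, V, hVD, hVB⟩ := key U hU
    exact hBU (mem_sInter.1 hx B ⟨hB, V, hVD, hVB⟩)
end

section
/- There exists a countable set X, a countable partially ordered value set Γ with smallest element ⊥, and an ultrametric u : X × X → Γ such that the ultrametric ball space (X, 𝓑_u) is spherically complete, yet no expansion (X, 𝓑') with 𝓑_u ⊆ 𝓑' is both chain union closed and spherically complete. (Concretely one may take X = ℕ and Γ = {∅} ∪ {closed intervals [k, ℓ] of nonnegative integers with k < ℓ} ordered by inclusion, with u(x,y) = [min(x,y), max(x,y)] for x ≠ y and u(x,x) = ∅.) -/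
open Set

namespace ThmAux

/-- Generator for the value set: `none ↦ ∅`, `some (a,b) ↦ Icc a b`. -/
def g : Option (ℕ × ℕ) → Set ℕ := fun o => o.elim ∅ fun p => Icc p.1 p.2

/-- The value set: `∅` together with intervals of naturals, ordered by inclusion. -/
abbrev G : Type := ↥(Set.range g)

instance : OrderBot G where
  bot := ⟨∅, ⟨none, rfl⟩⟩
  bot_le := fun γ => empty_subset γ.1

lemma G_bot_val : ((⊥ : G) : Set ℕ) = ∅ := rfl

lemma G_le_iff (s t : G) : s ≤ t ↔ (s : Set ℕ) ⊆ (t : Set ℕ) := Iff.rfl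

/-- The ultrametric. -/
def U : ℕ → ℕ → G := fun x y =>
  if x = y then ⊥
  else ⟨Icc (min x y) (max x y), ⟨some (min x y, max x y), rfl⟩⟩

lemma U_self (x : ℕ) : U x x = ⊥ := by simp [U]

lemma U_val_ne {x y : ℕ} (h : x ≠ y) :
    ((U x y : G) : Set ℕ) = Icc (min x y) (max x y) := by simp [U, h]

lemma U_isUltrametric : IsUltrametric U := by
  refine ⟨?_, ?_, ?_⟩
  · intro x y
    constructor
    · intro h
      by_contra hxy
      have hv : ((U x y : G) : Set ℕ) = ∅ := by rw [h]; rfl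
      rw [U_val_ne hxy] at hv
      have : min x y ∈ (∅ : Set ℕ) := hv ▸ left_mem_Icc.2 min_le_max
      exact this
    · rintro rfl; exact U_self x
  · intro x y z γ h1 h2
    by_cases hxz : x = z
    · subst hxz
      rw [U_self]; exact bot_le
    rw [G_le_iff, U_val_ne hxz]
    intro t ht
    rw [mem_Icc] at ht
    by_cases hxy : x = y
    · subst hxy
      apply h2
      show t ∈ ((U x z : G) : Set ℕ)
      rw [U_val_ne hxz, mem_Icc]; exact ht
    by_cases hyz : y = z
    · subst hyz
      apply h1
      show t ∈ ((U x y : G) : Set ℕ)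
      rw [U_val_ne hxz, mem_Icc]; exact ht
    have key : (min x y ≤ t ∧ t ≤ max x y) ∨ (min y z ≤ t ∧ t ≤ max y z) := by omega
    rcases key with hk | hk
    · apply h1; show t ∈ ((U x y : G) : Set ℕ); rw [U_val_ne hxy, mem_Icc]; exact hk
    · apply h2; show t ∈ ((U y z : G) : Set ℕ); rw [U_val_ne hyz, mem_Icc]; exact hk
  · intro x y
    by_cases h : x = y
    · subst h; rfl
    · apply Subtype.ext
      rw [U_val_ne h, U_val_ne (Ne.symm h), min_comm, max_comm]

lemma uball_eq (x y : ℕ) : uball U x y = Icc (min x y) (max x y) := by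
  ext z
  simp only [uball, mem_setOf_eq, mem_Icc]
  by_cases hxy : x = y
  · subst hxy
    rw [U_self]
    constructor
    · intro h
      by_cases hzx : z = x
      · omega
      rw [G_le_iff, U_val_ne (fun hh => hzx hh.symm), G_bot_val] at h
      have : min x z ∈ (∅ : Set ℕ) := h (left_mem_Icc.2 min_le_max)
      exact absurd this (notMem_empty _)
    · intro h
      have : z = x := by omega
      subst this; rw [U_self]
  · by_cases hzx : z = x
    · subst hzx
      rw [U_self]
      exact ⟨fun _ => by omega, fun _ => bot_le⟩
    · rw [G_le_iff, U_val_ne (fun hh => hzx hh.symm), U_val_ne hxy,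
        Icc_subset_Icc_iff min_le_max, and_comm]
      constructor
      · intro h; omega
      · intro h; omega

lemma Icc_mem_uballSpace {a b : ℕ} (h : a ≤ b) : Icc a b ∈ uballSpace U := by
  refine ⟨a, b, ?_⟩
  rw [uball_eq, min_eq_left h, max_eq_right h]

lemma uballSpace_shape {S : Set ℕ} (hS : S ∈ uballSpace U) :
    ∃ a b : ℕ, a ≤ b ∧ S = Icc a b := by
  obtain ⟨x, y, rfl⟩ := hS
  exact ⟨min x y, max x y, min_le_max, uball_eq x y⟩

lemma sInf_Icc_nat {a b : ℕ} (h : a ≤ b) : sInf (Icc a b) = a := by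
  apply le_antisymm (Nat.sInf_le (left_mem_Icc.2 h))
  have := Nat.sInf_mem (s := Icc a b) ⟨a, left_mem_Icc.2 h⟩
  exact (mem_Icc.1 this).1

lemma sc_uballSpace : SphericallyComplete (uballSpace U) := by
  intro C hCsub hCne hchain
  obtain ⟨S₀, hS₀⟩ := hCne
  obtain ⟨a₀, b₀, hab₀, hS₀eq⟩ := uballSpace_shape (hCsub hS₀)
  set L : Set ℕ := sInf '' C with hL
  have hLne : L.Nonempty := ⟨sInf S₀, ⟨S₀, hS₀, rfl⟩⟩
  have hshape : ∀ S ∈ C, ∃ a b : ℕ, a ≤ b ∧ S = Icc a b :=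
    fun S hS => uballSpace_shape (hCsub hS)
  have hSne : ∀ S ∈ C, S.Nonempty := by
    intro S hS
    obtain ⟨a, b, hab, rfl⟩ := hshape S hS
    exact ⟨a, left_mem_Icc.2 hab⟩
  have hLbdd : BddAbove L := by
    refine ⟨b₀, ?_⟩
    rintro _ ⟨S, hS, rfl⟩
    rcases eq_or_ne S S₀ with rfl | hne
    · rw [hS₀eq]; rw [sInf_Icc_nat hab₀]; exact hab₀
    rcases hchain hS hS₀ hne with hsub | hsub
    · obtain ⟨y, hy⟩ := hSne S hS
      have : y ∈ Icc a₀ b₀ := hS₀eq ▸ hsub hy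
      exact le_trans (Nat.sInf_le hy) (mem_Icc.1 this).2
    · have ha₀ : a₀ ∈ S := hsub (hS₀eq ▸ left_mem_Icc.2 hab₀)
      exact le_trans (Nat.sInf_le ha₀) hab₀
  have hm : sSup L ∈ L := Nat.sSup_mem hLne hLbdd
  obtain ⟨T, hT, hTm⟩ := hm
  refine ⟨sSup L, ?_⟩
  intro S hS
  obtain ⟨a, b, hab, rfl⟩ := hshape S hS
  have ham : a ≤ sSup L := by
    have : sInf (Icc a b) ∈ L := ⟨Icc a b, hS, rfl⟩
    have := le_csSup hLbdd this
    rwa [sInf_Icc_nat hab] at this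
  rcases eq_or_ne T (Icc a b) with rfl | hne
  · rw [← hTm]; exact Nat.sInf_mem (hSne _ hS)
  rcases hchain hT hS hne with hsub | hsub
  · rw [← hTm]; exact hsub (Nat.sInf_mem (hSne T hT))
  · have : sSup L ≤ a := by
      rw [← hTm]
      exact Nat.sInf_le (hsub (left_mem_Icc.2 hab))
    have : sSup L = a := le_antisymm this ham
    rw [this]; exact left_mem_Icc.2 hab

lemma no_expansion :
    ∀ B' : Set (Set ℕ), uballSpace U ⊆ B' → (∀ S ∈ B', S.Nonempty) →
      ¬(ChainUnionClosed B' ∧ SphericallyComplete B') := by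
  rintro B' hsub _ ⟨hcuc, hsc⟩
  have hIci : ∀ n : ℕ, Ici n ∈ B' := by
    intro n
    have hmem : Ici n ∈ cu B' := by
      refine ⟨{S | ∃ m : ℕ, S = Icc n (n + m)}, ?_, ⟨Icc n (n + 0), ⟨0, rfl⟩⟩, ?_, ?_⟩
      · rintro _ ⟨m, rfl⟩
        exact hsub (Icc_mem_uballSpace (Nat.le_add_right n m))
      · rintro _ ⟨m₁, rfl⟩ _ ⟨m₂, rfl⟩ _
        rcases le_total m₁ m₂ with h | h
        · exact Or.inl (Icc_subset_Icc le_rfl (by omega))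
        · exact Or.inr (Icc_subset_Icc le_rfl (by omega))
      · ext x
        simp only [mem_Ici, mem_sUnion, mem_setOf_eq]
        constructor
        · intro hx
          exact ⟨Icc n (n + (x - n)), ⟨x - n, rfl⟩, mem_Icc.2 (by omega)⟩
        · rintro ⟨_, ⟨m, rfl⟩, hx⟩
          exact (mem_Icc.1 hx).1
    rwa [hcuc] at hmem
  have hchain : IsChain (· ⊆ ·) (Set.range (Ici : ℕ → Set ℕ)) := by
    rintro _ ⟨n₁, rfl⟩ _ ⟨n₂, rfl⟩ _
    rcases le_total n₁ n₂ with h | h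
    · exact Or.inr (Ici_subset_Ici.2 h)
    · exact Or.inl (Ici_subset_Ici.2 h)
  obtain ⟨x, hx⟩ := hsc (Set.range (Ici : ℕ → Set ℕ))
    (by rintro _ ⟨n, rfl⟩; exact hIci n) ⟨Ici 0, ⟨0, rfl⟩⟩ hchain
  have : x ∈ Ici (x + 1) := hx _ ⟨x + 1, rfl⟩
  exact absurd (mem_Ici.1 this) (by omega)

end ThmAux

/-- Theorem 1.4: there is a countable spherically complete ultrametric space with countable
partially ordered value set whose ball space admits no expansion that is both chain union
closed and spherically complete. -/
theorem exists_ultrametric_no_chainUnionClosed_sphericallyComplete_expansion :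
    ∃ (X : Type) (Γ : Type) (instΓ : PartialOrder Γ) (instBot : @OrderBot Γ instΓ.toLE)
      (u : X → X → Γ),
      Countable X ∧ Countable Γ ∧ Nonempty X ∧
      @IsUltrametric X Γ instΓ instBot u ∧
      SphericallyComplete (@uballSpace X Γ instΓ u) ∧
      ∀ B' : Set (Set X), @uballSpace X Γ instΓ u ⊆ B' → (∀ S ∈ B', S.Nonempty) →
        ¬(ChainUnionClosed B' ∧ SphericallyComplete B') := by
  refine ⟨ℕ, ThmAux.G, inferInstance, inferInstance, ThmAux.U,
    inferInstance, ?_, ⟨0⟩, ThmAux.U_isUltrametric, ThmAux.sc_uballSpace, ThmAux.no_expansion⟩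
  exact (Set.countable_range ThmAux.g).to_subtype
end

section
/- Every ultrametric ball space (with a partially ordered value set) is chain regular: for every nonempty chain 𝓒 ⊆ 𝓑_u of precise balls and every precise ball B with B ⊆ ⋃𝓒, there exists C ∈ 𝓒 with B ⊆ C. -/
open Set

section ChainRegularDef

variable {X : Type*}

/-- A ball space is chain regular if every ball contained in the union of a nonempty chain of
balls is contained in some member of the chain. -/
def ChainRegular (B : Set (Set X)) : Prop :=
  ∀ C : Set (Set X), C ⊆ B → C.Nonempty → IsChain (· ⊆ ·) C →
    ∀ A ∈ B, A ⊆ ⋃₀ C → ∃ D ∈ C, A ⊆ D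

end ChainRegularDef

/-- Proposition 2.1: every ultrametric ball space (with a partially ordered value set)
is chain regular. -/
theorem uballSpace_chainRegular {X Γ : Type*} [PartialOrder Γ] [OrderBot Γ]
    (u : X → X → Γ) (hu : IsUltrametric u) :
    ChainRegular (uballSpace u) := by
  obtain ⟨h1, h2, h3⟩ := hu
  intro C hCB _ hchain A hA hAU
  obtain ⟨x, y, rfl⟩ := hA
  have hx : x ∈ uball u x y := by
    simp [uball, (h1 x x).2 rfl]
  have hy : y ∈ uball u x y := le_refl _
  obtain ⟨D1, hD1C, hxD1⟩ := hAU hx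
  obtain ⟨D2, hD2C, hyD2⟩ := hAU hy
  -- get a single ball in the chain containing both x and y
  obtain ⟨D, hDC, hxD, hyD⟩ : ∃ D ∈ C, x ∈ D ∧ y ∈ D := by
    rcases eq_or_ne D1 D2 with rfl | hne
    · exact ⟨D1, hD1C, hxD1, hyD2⟩
    · rcases hchain hD1C hD2C hne with h | h
      · exact ⟨D2, hD2C, h hxD1, hyD2⟩
      · exact ⟨D1, hD1C, hxD1, h hyD2⟩
  obtain ⟨a, b, rfl⟩ := hCB hDC
  refine ⟨uball u a b, hDC, fun z hz => ?_⟩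
  have hax : u a x ≤ u a b := hxD
  have hay : u a y ≤ u a b := hyD
  have hxa : u x a ≤ u a b := (h3 x a) ▸ hax
  have hxy : u x y ≤ u a b := h2 x a y _ hxa hay
  have hxz : u x z ≤ u a b := le_trans hz hxy
  exact h2 a x z _ hax hxz
end

section
/- Let (X, 𝓑) be a chain regular ball space such that every chain in cu(𝓑) has countable cofinality (i.e., every nonempty inclusion-chain 𝓒 ⊆ cu(𝓑) has a countable subset 𝓒' ⊆ 𝓒 such that every member of 𝓒 is contained in some member of 𝓒'). Then (X, 𝓑) is chain union stable. -/
open Set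

/-- Any family is contained in its family of chain unions (via singleton chains). -/
lemma self_subset_cu {X : Type*} (B : Set (Set X)) : B ⊆ cu B := fun b hb =>
  ⟨{b}, singleton_subset_iff.mpr hb, singleton_nonempty _,
    Set.subsingleton_singleton.isChain, (sUnion_singleton (s := b)).symm⟩

/-- Build an increasing sequence absorbing a given countable family. -/
lemma seq_builder {X : Type*} (S : Set (Set X)) (t : ℕ → Set X)
    (x0 : Set X) (hx0 : x0 ∈ S) (ht0 : t 0 ⊆ x0)
    (h : ∀ x ∈ S, ∀ k : ℕ, ∃ y ∈ S, x ⊆ y ∧ t k ⊆ y) :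
    ∃ b : ℕ → Set X, (∀ k, b k ∈ S) ∧ (∀ k, b k ⊆ b (k+1)) ∧ ∀ k, t k ⊆ b k := by
  choose f hfS hfsub hft using h
  let b : ℕ → {x : Set X // x ∈ S} := fun k =>
    Nat.rec ⟨x0, hx0⟩ (fun k p => ⟨f p.1 p.2 (k+1), hfS p.1 p.2 (k+1)⟩) k
  refine ⟨fun k => (b k).1, fun k => (b k).2, fun k => hfsub _ _ _, ?_⟩
  intro k
  cases k with
  | zero => exact ht0
  | succ k => exact hft _ _ _

/-- Lemma 2.2: a chain regular ball space in which every chain in `cu 𝓑` has countable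
cofinality is chain union stable. -/
theorem chainRegular_countableCofinality_chainUnionStable {X : Type*} [Nonempty X]
    (B : Set (Set X)) (hball : IsBallSpace B) (hreg : ChainRegular B)
    (hcof : ∀ C : Set (Set X), C ⊆ cu B → C.Nonempty → IsChain (· ⊆ ·) C →
      ∃ C' ⊆ C, C'.Countable ∧ ∀ D ∈ C, ∃ E ∈ C', D ⊆ E) :
    ChainUnionStable B := by
  classical
  apply subset_antisymm
  · rintro U ⟨C, hCsub, hCne, hCchain, rfl⟩
    obtain ⟨C', hC'sub, hC'count, hC'cof⟩ := hcof C hCsub hCne hCchain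
    have hC'ne : C'.Nonempty := by
      obtain ⟨E, hE⟩ := hCne
      obtain ⟨F, hF, _⟩ := hC'cof E hE
      exact ⟨F, hF⟩
    obtain ⟨D, hD⟩ := Set.Countable.exists_eq_range hC'count hC'ne
    have hDC : ∀ n, D n ∈ C := fun n => hC'sub (hD ▸ mem_range_self n)
    have hDcu : ∀ n, D n ∈ cu B := fun n => hCsub (hDC n)
    choose Cc hCcB hCcne hCcchain hCcU using hDcu
    have := fun n => hcof (Cc n) (fun b hb => self_subset_cu B (hCcB n hb))
      (hCcne n) (hCcchain n)
    choose Cs hCsSub hCsCount hCsCof using this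
    have hCsne : ∀ n, (Cs n).Nonempty := fun n => by
      obtain ⟨b, hb⟩ := hCcne n
      obtain ⟨c, hc, _⟩ := hCsCof n b hb
      exact ⟨c, hc⟩
    choose a ha using fun n => Set.Countable.exists_eq_range (hCsCount n) (hCsne n)
    have haCc : ∀ n m, a n m ∈ Cc n := fun n m => hCsSub n ((ha n) ▸ mem_range_self m)
    -- helper: absorb a ball from `B` lying in `⋃₀ Cc q` together with a member of `Cc q`
    have pairup : ∀ (x : Set X), x ∈ B → ∀ (q : ℕ) (y : Set X), y ∈ Cc q →
        x ⊆ ⋃₀ Cc q → ∃ c ∈ Cc q, x ⊆ c ∧ y ⊆ c := by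
      intro x hxB q y hy hxsub
      obtain ⟨c₁, hc₁, hxc₁⟩ := hreg (Cc q) (hCcB q) (hCcne q) (hCcchain q) x hxB hxsub
      rcases eq_or_ne c₁ y with rfl | hne
      · exact ⟨c₁, hc₁, hxc₁, Subset.rfl⟩
      · rcases hCcchain q hc₁ hy hne with h | h
        · exact ⟨y, hy, hxc₁.trans h, Subset.rfl⟩
        · exact ⟨c₁, hc₁, hxc₁, h⟩
    -- key step: any two balls from the chains `Cc` have a common upper bound in some `Cc q`
    have key : ∀ (c : Set X) (r : ℕ), c ∈ Cc r → ∀ (p : ℕ) (A : Set X), A ∈ Cc p →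
        ∃ q c', c' ∈ Cc q ∧ c ⊆ c' ∧ A ⊆ c' := by
      intro c r hc p A hA
      have hcD : c ⊆ D r := (hCcU r) ▸ subset_sUnion_of_mem hc
      have hAD : A ⊆ D p := (hCcU p) ▸ subset_sUnion_of_mem hA
      have hsub : D r ⊆ D p ∨ D p ⊆ D r := by
        rcases eq_or_ne (D r) (D p) with h | h
        · exact Or.inl h.subset
        · exact hCchain (hDC r) (hDC p) h
      rcases hsub with h | h
      · obtain ⟨c', hc', h1, h2⟩ := pairup c (hCcB r hc) p A hA
          ((hcD.trans h).trans (hCcU p).subset)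
        exact ⟨p, c', hc', h1, h2⟩
      · obtain ⟨c', hc', h1, h2⟩ := pairup A (hCcB p hA) r c hc
          ((hAD.trans h).trans (hCcU r).subset)
        exact ⟨r, c', hc', h2, h1⟩
    -- build the increasing sequence
    set t : ℕ → Set X := fun k => a k.unpair.1 k.unpair.2 with ht_def
    have htCc : ∀ k, t k ∈ Cc k.unpair.1 := fun k => haCc _ _
    obtain ⟨b, hbS, hbsucc, hbt⟩ := seq_builder {c : Set X | ∃ r, c ∈ Cc r} t
      (a 0 0) ⟨0, haCc 0 0⟩ (by simp [ht_def, Nat.unpair_zero]) (by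
        rintro x ⟨r, hx⟩ k
        obtain ⟨q, c', hc', h1, h2⟩ := key x r hx k.unpair.1 (t k) (htCc k)
        exact ⟨c', ⟨q, hc'⟩, h1, h2⟩)
    have hbmono : Monotone b := monotone_nat_of_le_succ hbsucc
    refine ⟨range b, ?_, range_nonempty _, ?_, ?_⟩
    · rintro _ ⟨k, rfl⟩
      obtain ⟨r, hr⟩ := hbS k
      exact hCcB r hr
    · rintro _ ⟨k, rfl⟩ _ ⟨l, rfl⟩ _
      rcases le_total k l with h | h
      · exact Or.inl (hbmono h)
      · exact Or.inr (hbmono h)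
    · rw [sUnion_range]
      apply subset_antisymm
      · rintro x ⟨E, hE, hxE⟩
        obtain ⟨F, hF, hEF⟩ := hC'cof E hE
        rw [hD] at hF
        obtain ⟨n, rfl⟩ := hF
        have hx : x ∈ ⋃₀ Cc n := (hCcU n) ▸ hEF hxE
        obtain ⟨c, hc, hxc⟩ := hx
        obtain ⟨e, he, hce⟩ := hCsCof n c hc
        rw [ha n] at he
        obtain ⟨m, rfl⟩ := he
        have : a n m ⊆ b (Nat.pair n m) := by
          have := hbt (Nat.pair n m)
          simpa [ht_def, Nat.unpair_pair] using this
        exact mem_iUnion.mpr ⟨Nat.pair n m, this (hce hxc)⟩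
      · refine iUnion_subset fun k => ?_
        obtain ⟨r, hr⟩ := hbS k
        have : b k ⊆ D r := (hCcU r) ▸ subset_sUnion_of_mem hr
        exact this.trans (subset_sUnion_of_mem (hDC r))
  · exact self_subset_cu (cu B)
end

section
/- Let (P, ≤) be a partially ordered set, Q ⊆ P, and C a chain in P such that each element of C is the supremum (least upper bound in P) of some nonempty chain contained in Q. Let κ be an uncountable regular cardinal with |Q| < κ. Then C does not contain a copy of (κ, ∈); that is, there is no strictly increasing (order-preserving and injective) map from κ into C. -/
open Set Cardinal

/-- Lemma 2.3: if every element of a chain `C` in a poset `P` is the supremum of a nonempty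
chain contained in `Q`, and `κ` is an uncountable regular cardinal with `|Q| < κ`, then `C`
contains no copy of `(κ, ∈)`, i.e. there is no strictly increasing map from `κ` into `C`. -/
theorem chain_of_sups_no_increasing_copy_of_regular {P : Type*} [PartialOrder P]
    (Q : Set P) (C : Set P) (hCne : C.Nonempty) (hC : IsChain (· ≤ ·) C)
    (hsup : ∀ c ∈ C, ∃ S : Set P, S ⊆ Q ∧ S.Nonempty ∧ IsChain (· ≤ ·) S ∧ IsLUB S c)
    (κ : Cardinal) (hreg : κ.IsRegular) (hunc : Cardinal.aleph0 < κ)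
    (hQ : Cardinal.mk Q < κ) :
    ¬∃ φ : κ.ord.ToType → P, StrictMono φ ∧ ∀ i, φ i ∈ C := by
  rintro ⟨φ, hmono, hmem⟩
  haveI : NoMaxOrder κ.ord.ToType := Cardinal.noMaxOrder hunc.le
  letI : SuccOrder κ.ord.ToType := SuccOrder.ofLinearWellFoundedLT _
  choose S hSQ hSne hSchain hSlub using hsup
  have key : ∀ i : κ.ord.ToType, ∃ q ∈ S _ (hmem (Order.succ i)),
      q ≤ φ (Order.succ i) ∧ ¬ q ≤ φ i := by
    intro i
    have hlt : φ i < φ (Order.succ i) := hmono (Order.lt_succ i)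
    by_contra h
    push_neg at h
    have hub : φ i ∈ upperBounds (S _ (hmem (Order.succ i))) := fun q hq =>
      h q hq ((hSlub _ (hmem (Order.succ i))).1 hq)
    exact absurd ((hSlub _ (hmem (Order.succ i))).2 hub) hlt.not_ge
  choose q hqS hqle hqnle using key
  have hinj : Function.Injective fun i => (⟨q i, hSQ _ _ (hqS i)⟩ : Q) := by
    intro i j hij
    simp only [Subtype.mk.injEq] at hij
    by_contra hne
    rcases lt_or_gt_of_ne hne with h | h
    · have h1 : q i ≤ φ j := (hqle i).trans (hmono.monotone (Order.succ_le_of_lt h))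
      exact hqnle j (hij ▸ h1)
    · have h1 : q j ≤ φ i := (hqle j).trans (hmono.monotone (Order.succ_le_of_lt h))
      exact hqnle i (hij ▸ h1)
  have hκ : κ ≤ Cardinal.mk Q := by
    have := Cardinal.mk_le_of_injective hinj
    rwa [Cardinal.mk_toType, Cardinal.card_ord] at this
  exact absurd hQ (not_lt.mpr hκ)
end

section
/- Let (X, 𝓑) be a tree-like ball space. Then (X, cu(𝓑)) is tree-like and chain union closed. -/
open Set

section TreeLikeDef

variable {X : Type*}

/-- A ball space is tree-like if any two balls with nonempty intersection are comparable. -/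
def TreeLike (B : Set (Set X)) : Prop :=
  ∀ B₁ ∈ B, ∀ B₂ ∈ B, (B₁ ∩ B₂).Nonempty → B₁ ⊆ B₂ ∨ B₂ ⊆ B₁

end TreeLikeDef

lemma chain_pair {X : Type*} {C : Set (Set X)} (h : IsChain (· ⊆ ·) C) {a b : Set X}
    (ha : a ∈ C) (hb : b ∈ C) : ∃ c ∈ C, a ⊆ c ∧ b ⊆ c := by
  rcases eq_or_ne a b with rfl | hne
  · exact ⟨a, ha, subset_rfl, subset_rfl⟩
  · rcases h ha hb hne with h' | h'
    · exact ⟨b, hb, h', subset_rfl⟩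
    · exact ⟨a, ha, subset_rfl, h'⟩

/-- Theorem 4.1 (first part): for a tree-like ball space `(X, 𝓑)`, the ball space
`(X, cu 𝓑)` is tree-like and chain union closed. -/
theorem treeLike_cu_treeLike_and_chainUnionClosed {X : Type*} [Nonempty X]
    (B : Set (Set X)) (hball : IsBallSpace B) (htree : TreeLike B) :
    TreeLike (cu B) ∧ ChainUnionClosed (cu B) := by
  obtain ⟨hBne, hBnonempty⟩ := hball
  constructor
  · rintro U₁ ⟨C₁, hC₁B, hC₁ne, hC₁ch, rfl⟩ U₂ ⟨C₂, hC₂B, hC₂ne, hC₂ch, rfl⟩ ⟨x, hx₁, hx₂⟩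
    by_cases h : ⋃₀ C₂ ⊆ ⋃₀ C₁
    · exact Or.inr h
    · left
      rw [Set.not_subset] at h
      obtain ⟨y, hy2, hy1⟩ := h
      obtain ⟨b₁, hb₁C, hxb₁⟩ := hx₁
      obtain ⟨b₂, hb₂C, hxb₂⟩ := hx₂
      obtain ⟨b₂', hb₂'C, hyb₂'⟩ := hy2
      obtain ⟨b₄, hb₄C, hb₂s, hb₂'s⟩ := chain_pair hC₂ch hb₂C hb₂'C
      intro z hz
      obtain ⟨b, hbC, hzb⟩ := hz
      obtain ⟨b₃, hb₃C, hbs, hb₁s⟩ := chain_pair hC₁ch hbC hb₁C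
      rcases htree b₃ (hC₁B hb₃C) b₄ (hC₂B hb₄C) ⟨x, hb₁s hxb₁, hb₂s hxb₂⟩ with h' | h'
      · exact ⟨b₄, hb₄C, h' (hbs hzb)⟩
      · exact absurd ⟨b₃, hb₃C, h' (hb₂'s hyb₂')⟩ hy1
  · apply Set.eq_of_subset_of_subset
    · rintro U ⟨D, hDcu, ⟨U₀, hU₀D⟩, hDch, rfl⟩
      obtain ⟨C₀, hC₀B, ⟨b₀, hb₀C⟩, hC₀ch, hU₀eq⟩ := hDcu hU₀D
      obtain ⟨x₀, hx₀b₀⟩ := hBnonempty b₀ (hC₀B hb₀C)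
      have hx₀U₀ : x₀ ∈ U₀ := hU₀eq ▸ ⟨b₀, hb₀C, hx₀b₀⟩
      set C : Set (Set X) := {b | b ∈ B ∧ x₀ ∈ b ∧ b ⊆ ⋃₀ D} with hCdef
      have hclaim : ∀ W ∈ D, x₀ ∈ W → W ⊆ ⋃₀ C := by
        intro W hWD hx₀W z hzW
        obtain ⟨CW, hCWB, _, hCWch, hWeq⟩ := hDcu hWD
        rw [hWeq] at hzW hx₀W
        obtain ⟨b, hbC, hzb⟩ := hzW
        obtain ⟨b', hb'C, hx₀b'⟩ := hx₀W
        obtain ⟨c, hcC, hbs, hb's⟩ := chain_pair hCWch hbC hb'C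
        have hcD : c ⊆ ⋃₀ D := by
          rw [hWeq] at hWD
          exact (Set.subset_sUnion_of_mem hcC).trans (Set.subset_sUnion_of_mem hWD)
        exact ⟨c, ⟨hCWB hcC, hb's hx₀b', hcD⟩, hbs hzb⟩
      refine ⟨C, fun b hb => hb.1, ⟨b₀, hC₀B hb₀C, hx₀b₀, ?_⟩, ?_, ?_⟩
      · exact (hU₀eq ▸ Set.subset_sUnion_of_mem hb₀C : b₀ ⊆ U₀).trans
          (Set.subset_sUnion_of_mem hU₀D)
      · intro a ha b hb _
        exact htree a ha.1 b hb.1 ⟨x₀, ha.2.1, hb.2.1⟩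
      · apply Set.eq_of_subset_of_subset
        · rintro z ⟨W, hWD, hzW⟩
          obtain ⟨V, hVD, hWs, hU₀s⟩ := chain_pair hDch hWD hU₀D
          exact hclaim V hVD (hU₀s hx₀U₀) (hWs hzW)
        · exact Set.sUnion_subset fun b hb => hb.2.2
    · intro U hU
      exact ⟨{U}, Set.singleton_subset_iff.2 hU, Set.singleton_nonempty _,
        Set.subsingleton_singleton.isChain, (Set.sUnion_singleton U).symm⟩
end

section
/- Let (X, 𝓑) be a tree-like ball space. If (X, 𝓑) is spherically complete, then so is (X, cu(𝓑)). -/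
open Set

/-- Key lemma: in a tree-like ball space, a ball meeting a union of a chain of balls
is comparable with that union. -/
lemma treeLike_ball_sUnion_comparable {X : Type*} {B : Set (Set X)} (htree : TreeLike B)
    {b : Set X} (hb : b ∈ B) {C : Set (Set X)} (hCB : C ⊆ B) (hchain : IsChain (· ⊆ ·) C)
    (hmeet : (b ∩ ⋃₀ C).Nonempty) : b ⊆ ⋃₀ C ∨ ⋃₀ C ⊆ b := by
  obtain ⟨x, hxb, b₀, hb₀C, hxb₀⟩ := hmeet
  by_cases hsub : b ⊆ ⋃₀ C
  · exact Or.inl hsub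
  right
  intro y hy
  obtain ⟨b'', hb''C, hyb''⟩ := hy
  have hb₀b : b₀ ⊆ b := by
    rcases htree b₀ (hCB hb₀C) b hb ⟨x, hxb₀, hxb⟩ with h | h
    · exact h
    · exact absurd (h.trans (subset_sUnion_of_mem hb₀C)) hsub
  rcases eq_or_ne b₀ b'' with rfl | hne
  · exact hb₀b hyb''
  rcases hchain hb₀C hb''C hne with h | h
  · rcases htree b hb b'' (hCB hb''C) ⟨x, hxb, h hxb₀⟩ with h2 | h2
    · exact absurd (h2.trans (subset_sUnion_of_mem hb''C)) hsub
    · exact h2 hyb''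
  · exact hb₀b (h hyb'')

/-- Theorem 4.1 (second part): if a tree-like ball space `(X, 𝓑)` is spherically complete,
then so is `(X, cu 𝓑)`. -/
theorem treeLike_cu_sphericallyComplete {X : Type*} [Nonempty X]
    (B : Set (Set X)) (hball : IsBallSpace B) (htree : TreeLike B)
    (hsc : SphericallyComplete B) :
    SphericallyComplete (cu B) := by
  intro 𝒞 h𝒞cu h𝒞ne h𝒞chain
  -- every element of `cu B` is nonempty
  have hcu_ne : ∀ U ∈ cu B, U.Nonempty := by
    rintro U ⟨C, hCB, ⟨c, hc⟩, -, rfl⟩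
    obtain ⟨x, hx⟩ := hball.2 c (hCB hc)
    exact ⟨x, c, hc, hx⟩
  by_cases hmin : ∃ U₀ ∈ 𝒞, ∀ U ∈ 𝒞, U₀ ⊆ U
  · obtain ⟨U₀, hU₀, hminto⟩ := hmin
    obtain ⟨x, hx⟩ := hcu_ne U₀ (h𝒞cu hU₀)
    exact ⟨x, fun U hU => hminto U hU hx⟩
  push_neg at hmin
  -- key claim : for every W in 𝒞 there is a ball b ∈ B with b ⊆ W containing some V ∈ 𝒞
  have key : ∀ W ∈ 𝒞, ∃ b ∈ B, b ⊆ W ∧ ∃ V ∈ 𝒞, V ⊆ b := by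
    intro W hW
    obtain ⟨V, hV𝒞, hVnW⟩ := hmin W hW
    have hVW : V ⊆ W := by
      rcases h𝒞chain.total hV𝒞 hW with h | h
      · exact h
      · exact absurd h hVnW
    obtain ⟨CW, hCWB, hCWne, hCWchain, hWeq⟩ := h𝒞cu hW
    obtain ⟨CV, hCVB, hCVne, hCVchain, hVeq⟩ := h𝒞cu hV𝒞
    obtain ⟨x, hxV⟩ := hcu_ne V (h𝒞cu hV𝒞)
    have hxW : x ∈ W := hVW hxV
    rw [hWeq] at hxW
    obtain ⟨b₀, hb₀CW, hxb₀⟩ := hxW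
    by_contra hcon
    push_neg at hcon
    -- show W ⊆ V, contradicting hVnW
    have hb₀V : b₀ ⊆ V := by
      have := treeLike_ball_sUnion_comparable htree (hCWB hb₀CW) hCVB hCVchain
        (by rw [← hVeq]; exact ⟨x, hxb₀, hxV⟩)
      rw [← hVeq] at this
      rcases this with h | h
      · exact h
      · exact absurd h (by
          have := hcon b₀ (hCWB hb₀CW) (hWeq ▸ subset_sUnion_of_mem hb₀CW)
          intro hVb₀
          exact this V hV𝒞 hVb₀)
    apply hVnW
    intro y hy
    rw [hWeq] at hy
    obtain ⟨b, hbCW, hyb⟩ := hy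
    rcases eq_or_ne b b₀ with rfl | hne
    · exact hb₀V hyb
    have hbV : b ⊆ V := by
      rcases hCWchain hbCW hb₀CW hne with h | h
      · exact fun z hz => hb₀V (h hz)
      · have := treeLike_ball_sUnion_comparable htree (hCWB hbCW) hCVB hCVchain
          (by rw [← hVeq]; exact ⟨x, h hxb₀, hxV⟩)
        rw [← hVeq] at this
        rcases this with h2 | h2
        · exact h2
        · exact absurd h2 (by
            have := hcon b (hCWB hbCW) (hWeq ▸ subset_sUnion_of_mem hbCW)
            intro hVb
            exact this V hV𝒞 hVb)
    exact hbV hyb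
  -- the family D of balls b ⊆ some W ∈ 𝒞 containing some V ∈ 𝒞
  set D : Set (Set X) := {b | b ∈ B ∧ (∃ W ∈ 𝒞, b ⊆ W) ∧ ∃ V ∈ 𝒞, V ⊆ b} with hD
  have hDB : D ⊆ B := fun b hb => hb.1
  have hDne : D.Nonempty := by
    obtain ⟨W, hW⟩ := h𝒞ne
    obtain ⟨b, hbB, hbW, V, hV, hVb⟩ := key W hW
    exact ⟨b, hbB, ⟨W, hW, hbW⟩, V, hV, hVb⟩
  have hDchain : IsChain (· ⊆ ·) D := by
    rintro b ⟨hbB, -, V, hV𝒞, hVb⟩ b' ⟨hb'B, -, V', hV'𝒞, hV'b'⟩ hne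
    have hVne : V.Nonempty := hcu_ne V (h𝒞cu hV𝒞)
    have hV'ne : V'.Nonempty := hcu_ne V' (h𝒞cu hV'𝒞)
    rcases h𝒞chain.total hV𝒞 hV'𝒞 with h | h
    · obtain ⟨x, hx⟩ := hVne
      exact htree b hbB b' hb'B ⟨x, hVb hx, hV'b' (h hx)⟩
    · obtain ⟨x, hx⟩ := hV'ne
      exact htree b hbB b' hb'B ⟨x, hVb (h hx), hV'b' hx⟩
  obtain ⟨x, hx⟩ := hsc D hDB hDne hDchain
  refine ⟨x, fun W hW => ?_⟩
  obtain ⟨b, hbB, hbW, V, hV, hVb⟩ := key W hW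
  exact hbW (hx b ⟨hbB, ⟨W, hW, hbW⟩, V, hV, hVb⟩)
end

section
/- Let (P, ≤) be a narrow partially ordered set and let A ⊆ P be infinite. Then there exists a chain C ⊆ A with |C| = |A|. -/
open Set Cardinal

/-- A poset is narrow if it contains no infinite set of pairwise incomparable elements. -/
def IsNarrow (P : Type*) [PartialOrder P] : Prop :=
  ∀ A : Set P, (∀ a ∈ A, ∀ b ∈ A, a ≠ b → ¬a ≤ b ∧ ¬b ≤ a) → A.Finite

namespace NarrowChainAux

universe u
variable {P : Type u} [PartialOrder P]

/-- The set of elements comparable with `x`. -/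
def cmp (x : P) : Set P := {y | x ≤ y ∨ y ≤ x}

theorem self_mem_cmp (x : P) : x ∈ cmp x := Or.inl le_rfl

/-- In a narrow poset, every infinite set `B` has a full-size subset in which every element is
incomparable to fewer than `#B` elements. -/
theorem shrink (hP : IsNarrow P) (B : Set P) (hB : ℵ₀ ≤ #B) :
    ∃ B' : Set P, B' ⊆ B ∧ #B' = #↥B ∧ ∀ x ∈ B', #↥(B' \ cmp x) < #↥B := by
  classical
  by_contra hcon
  push_neg at hcon
  have hPne : Nonempty P := by
    have h0 : (#↥B) ≠ 0 := (aleph0_pos.trans_le hB).ne'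
    obtain ⟨⟨b, _⟩⟩ := Cardinal.mk_ne_zero_iff.1 h0
    exact ⟨b⟩
  choose! x hxmem hxbig using hcon
  let F : ℕ → Set P := fun n => Nat.rec B (fun _ S => S \ cmp (x S)) n
  have hFs : ∀ n, F (n + 1) = F n \ cmp (x (F n)) := fun _ => rfl
  have hFinv : ∀ n, F n ⊆ B ∧ #↥(F n) = #↥B := by
    intro n
    induction n with
    | zero => exact ⟨subset_rfl, rfl⟩
    | succ n ih =>
      have hbig := hxbig (F n) ih.1 ih.2
      rw [hFs n]
      exact ⟨diff_subset.trans ih.1,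
        le_antisymm (mk_le_mk_of_subset (diff_subset.trans ih.1)) hbig⟩
  have hxF : ∀ n, x (F n) ∈ F n := fun n => hxmem (F n) (hFinv n).1 (hFinv n).2
  have hmono : ∀ m n : ℕ, m ≤ n → F n ⊆ F m := by
    intro m n h
    induction n, h using Nat.le_induction with
    | base => exact subset_rfl
    | succ n hmn ih => rw [hFs n]; exact diff_subset.trans ih
  set g : ℕ → P := fun n => x (F n) with hg
  have hkey : ∀ m n : ℕ, m < n → g n ∉ cmp (g m) := by
    intro m n h
    have h1 : F n ⊆ F (m + 1) := hmono _ _ h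
    have h2 := h1 (hxF n)
    rw [hFs m] at h2
    exact h2.2
  have hinj : Function.Injective g := by
    intro m n hmn
    rcases lt_trichotomy m n with h | h | h
    · exact absurd (hmn ▸ self_mem_cmp (g m)) (hkey m n h)
    · exact h
    · exact absurd (hmn ▸ self_mem_cmp (g n)) (hkey n m h)
  have hfin := hP (Set.range g) ?_
  · exact (Set.infinite_range_of_injective hinj) hfin
  · rintro a ⟨m, rfl⟩ b ⟨n, rfl⟩ hab
    rcases lt_trichotomy m n with h | h | h
    · have := hkey m n h
      exact ⟨fun hle => this (Or.inl hle), fun hle => this (Or.inr hle)⟩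
    · exact absurd (congrArg g h) hab
    · have := hkey n m h
      exact ⟨fun hle => this (Or.inr hle), fun hle => this (Or.inl hle)⟩

/-- Regular case: a set of regular size all of whose points have small incomparability trace
contains a chain of full size.  (No narrowness needed here.) -/
theorem chain_of_regular (W : Set P) (hreg : (#↥W).IsRegular)
    (htr : ∀ x ∈ W, #↥(W \ cmp x) < #W) :
    ∃ C : Set P, C ⊆ W ∧ IsChain (· ≤ ·) C ∧ #↥C = #↥W := by
  classical
  have hzorn : ∀ c ⊆ {C : Set P | C ⊆ W ∧ IsChain (· ≤ ·) C}, IsChain (· ⊆ ·) c →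
      ∃ ub ∈ {C : Set P | C ⊆ W ∧ IsChain (· ≤ ·) C}, ∀ s ∈ c, s ⊆ ub := by
    intro c hc hchain
    refine ⟨⋃₀ c, ⟨sUnion_subset fun s hs => (hc hs).1, ?_⟩, fun s hs => subset_sUnion_of_mem hs⟩
    intro a ha b hb hab
    obtain ⟨s, hs, has⟩ := ha
    obtain ⟨t, ht, hbt⟩ := hb
    rcases hchain.total hs ht with h | h
    · exact (hc ht).2 (h has) hbt hab
    · exact (hc hs).2 has (h hbt) hab
  obtain ⟨C, hC⟩ := zorn_subset _ hzorn
  obtain ⟨⟨hCW, hCchain⟩, hmax⟩ := hC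
  refine ⟨C, hCW, hCchain, ?_⟩
  have hle : #↥C ≤ #↥W := mk_le_mk_of_subset hCW
  rcases hle.lt_or_eq with hlt | heq
  · exfalso
    have hℵ : ℵ₀ ≤ #↥W := hreg.aleph0_le
    have hexlt : #↥(⋃ z : C, ((W \ cmp (z : P)) ∪ {(z : P)})) < #↥W := by
      refine lt_of_le_of_lt (Cardinal.mk_iUnion_le _) ?_
      refine Cardinal.mul_lt_of_lt hℵ hlt ?_
      refine Ordinal.iSup_lt (by rwa [hreg.cof_eq]) ?_
      intro z
      refine lt_of_le_of_lt (mk_union_le _ _) ?_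
      refine Cardinal.add_lt_of_lt hℵ (htr _ (hCW z.2)) ?_
      simpa using one_lt_aleph0.trans_le hℵ
    have hnsub : ¬ W ⊆ ⋃ z : C, ((W \ cmp (z : P)) ∪ {(z : P)}) :=
      fun hsub => absurd (mk_le_mk_of_subset hsub) (not_le.2 hexlt)
    obtain ⟨y, hyW, hyex⟩ := not_subset.1 hnsub
    have hynot : ∀ z ∈ C, y ∉ (W \ cmp z) ∪ {z} := by
      intro z hz hmem
      exact hyex (mem_iUnion.2 ⟨⟨z, hz⟩, hmem⟩)
    have hyC : y ∉ C := fun hyC => hynot y hyC (Or.inr rfl)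
    have hcomp : ∀ z ∈ C, z ≤ y ∨ y ≤ z := by
      intro z hz
      by_contra hc
      exact hynot z hz (Or.inl ⟨hyW, hc⟩)
    have hins : insert y C ⊆ C := by
      refine hmax ⟨insert_subset hyW hCW, hCchain.insert ?_⟩ (subset_insert _ _)
      intro b hb _
      rcases hcomp b hb with h | h
      · exact Or.inr h
      · exact Or.inl h
    exact hyC (hins (mem_insert _ _))
  · exact heq


open Classical in
/-- Generic well-founded recursion used below: at each index `i` choose (if possible) a set
satisfying `Spec i U`, where `U` collects the `junk` of all previously chosen sets. -/
noncomputable def recD {ι : Type v} [LT ι]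
    (hwf : WellFounded ((· < ·) : ι → ι → Prop))
    (Spec : ι → Set P → Set P → Prop) (junk : Set P → Set P) : ι → Set P :=
  hwf.fix fun i rec =>
    if hs : ∃ S, Spec i (⋃ j : {j : ι // j < i}, junk (rec j.1 j.2)) S then hs.choose else ∅

omit [PartialOrder P] in
open Classical in
theorem recD_eq {ι : Type v} [LT ι]
    (hwf : WellFounded ((· < ·) : ι → ι → Prop))
    (Spec : ι → Set P → Set P → Prop) (junk : Set P → Set P) (i : ι) :
    recD hwf Spec junk i =
      if hs : ∃ S, Spec i (⋃ j : {j : ι // j < i}, junk (recD hwf Spec junk j.1)) S then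
        hs.choose
      else ∅ :=
  hwf.fix_eq _ i

/-- The singular case. -/
theorem chain_of_singular (hP : IsNarrow P) (W : Set P) (hW : ℵ₀ ≤ #↥W)
    (hreg : ¬(#↥W).IsRegular) (htr : ∀ x ∈ W, #↥(W \ cmp x) < #↥W) :
    ∃ C : Set P, C ⊆ W ∧ IsChain (· ≤ ·) C ∧ #↥C = #↥W := by
  classical
  haveI hwo : IsWellOrder ((#↥W).ord.cof.ord.ToType) (· < ·) :=
    @isWellOrder_lt _ _ (wellFoundedLT_toType _)
  have hℵκ : ℵ₀ < #↥W := lt_of_le_of_ne hW (fun e => hreg (e ▸ Cardinal.isRegular_aleph0))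
  have hsucclt : ∀ ν : Cardinal, ν < #↥W → Order.succ ν < #↥W := by
    intro ν hν
    by_contra hc
    have h2 : #↥W = Order.succ ν := le_antisymm (not_lt.1 hc) (Order.succ_le_of_lt hν)
    have hνℵ : ℵ₀ ≤ ν := by
      by_contra hfin
      have h3 : Order.succ ν ≤ ℵ₀ := Order.succ_le_of_lt (not_le.1 hfin)
      exact absurd (h2.le.trans h3) (not_le.2 hℵκ)
    exact hreg (h2 ▸ Cardinal.isRegular_succ hνℵ)
  have hlamκ : (#↥W).ord.cof < #↥W :=
    lt_of_le_of_ne (Ordinal.cof_ord_le _) (fun e => hreg ⟨hW, e.ge⟩)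
  have hlamℵ : ℵ₀ ≤ (#↥W).ord.cof := Ordinal.aleph0_le_cof.2 (Cardinal.isSuccLimit_ord hW)
  obtain ⟨f, hf⟩ := Ordinal.exists_fundamental_sequence (#↥W).ord
  haveI hιne : Nonempty ((#↥W).ord.cof.ord.ToType) := by
    refine Ordinal.toType_nonempty_iff_ne_zero.2 (fun h0 => ?_)
    have h1 := congrArg Ordinal.card h0
    rw [Cardinal.card_ord, Ordinal.card_zero] at h1
    exact (aleph0_pos.trans_le hlamℵ).ne' h1
  have htin : ∀ i : (#↥W).ord.cof.ord.ToType,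
      Ordinal.typein (· < ·) i < (#↥W).ord.cof.ord := by
    intro i
    have h1 := Ordinal.typein_lt_type ((· < ·) :
      (#↥W).ord.cof.ord.ToType → (#↥W).ord.cof.ord.ToType → Prop) i
    rwa [Ordinal.type_toType] at h1
  set θ : (#↥W).ord.cof.ord.ToType → Cardinal :=
    fun i => (f (Ordinal.typein (· < ·) i) (htin i)).card with hθ
  have hθκ : ∀ i, θ i < #↥W := by
    intro i
    have h1 := Ordinal.lt_blsub f (Ordinal.typein (· < ·) i) (htin i)
    rw [hf.blsub_eq] at h1
    exact Cardinal.lt_ord.1 h1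
  have hfcongr : ∀ (b₁ b₂ : Ordinal) (h₁ : b₁ < (#↥W).ord.cof.ord)
      (h₂ : b₂ < (#↥W).ord.cof.ord), b₁ = b₂ → f b₁ h₁ = f b₂ h₂ := by
    rintro b₁ _ h₁ h₂ rfl; rfl
  have hcof_hit : ∀ μ : Cardinal, μ < #↥W → ∃ i, μ ≤ θ i := by
    intro μ hμ
    have h1 : μ.ord < Ordinal.blsub (#↥W).ord.cof.ord f := by
      rw [hf.blsub_eq]; exact Cardinal.ord_lt_ord.2 hμ
    obtain ⟨b, hb, hle⟩ := Ordinal.lt_blsub_iff.1 h1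
    have hb' : b < Ordinal.type ((· < ·) :
        (#↥W).ord.cof.ord.ToType → (#↥W).ord.cof.ord.ToType → Prop) := by
      rwa [Ordinal.type_toType]
    refine ⟨Ordinal.enum (· < ·) ⟨b, hb'⟩, ?_⟩
    have he : Ordinal.typein (· < ·) (Ordinal.enum (· < ·) ⟨b, hb'⟩) = b :=
      Ordinal.typein_enum _ _
    calc μ = μ.ord.card := (Cardinal.card_ord μ).symm
    _ ≤ (f b hb).card := Ordinal.card_le_card hle
    _ = θ _ := by rw [hθ]; exact congrArg Ordinal.card (hfcongr _ _ hb (htin _) he.symm)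
  set junk : Set P → Set P := fun S => S ∪ ⋃ z : S, (W \ cmp (z : P)) with hjunk
  set Spec : (#↥W).ord.cof.ord.ToType → Set P → Set P → Prop := fun i U S =>
    S ⊆ W ∧ (∀ y ∈ S, y ∉ U) ∧ IsChain (· ≤ ·) S ∧ θ i ≤ #↥S ∧ #↥S < #↥W ∧
      ∃ ν : Cardinal, ν < #↥W ∧ ∀ x ∈ S, #↥(W \ cmp x) ≤ ν with hSpecDef
  have hwf : WellFounded ((· < ·) :
      (#↥W).ord.cof.ord.ToType → (#↥W).ord.cof.ord.ToType → Prop) := IsWellFounded.wf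
  set D := recD hwf Spec junk with hD
  have hSpec : ∀ i, Spec i (⋃ j : {j // j < i}, junk (D j.1)) (D i) := by
    refine fun i => hwf.induction
      (C := fun i => Spec i (⋃ j : {j // j < i}, junk (D j.1)) (D i)) i ?_
    intro i IH
    rw [hD, recD_eq, ← hD]
    have hUW : (⋃ j : {j // j < i}, junk (D j.1)) ⊆ W := by
      refine iUnion_subset fun j => ?_
      rw [hjunk]
      exact union_subset (IH j.1 j.2).1 (iUnion_subset fun z => diff_subset)
    have hidx : #{j // j < i} < (#↥W).ord.cof := by
      have h1 : (Ordinal.typein (· < ·) i).card < (#↥W).ord.cof :=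
        Cardinal.lt_ord.1 (htin i)
      exact h1
    have hUlt : #↥(⋃ j : {j // j < i}, junk (D j.1)) < #↥W := by
      refine lt_of_le_of_lt (Cardinal.mk_iUnion_le _) ?_
      refine Cardinal.mul_lt_of_lt hW (hidx.trans hlamκ) ?_
      refine Ordinal.iSup_lt hidx ?_
      intro j
      obtain ⟨hjW, -, -, -, hjcard, ν, hνκ, hνtr⟩ := IH j.1 j.2
      rw [hjunk]
      refine lt_of_le_of_lt (mk_union_le _ _) (Cardinal.add_lt_of_lt hW hjcard ?_)
      refine lt_of_le_of_lt Cardinal.mk_iUnion_le_sum_mk ?_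
      refine lt_of_le_of_lt (Cardinal.sum_le_sum _ (fun _ => ν) (fun z => hνtr z z.2)) ?_
      rw [Cardinal.sum_const']
      exact Cardinal.mul_lt_of_lt hW hjcard hνκ
    have hWUκ : #↥(W \ ⋃ j : {j // j < i}, junk (D j.1)) = #↥W := by
      refine le_antisymm (mk_le_mk_of_subset diff_subset) ?_
      by_contra hc
      have h1 := Cardinal.mk_diff_add_mk hUW
      exact absurd h1 (Cardinal.add_lt_of_lt hW (not_le.1 hc) hUlt).ne
    have hδκ : Order.succ (max (max (θ i) (#↥(⋃ j : {j // j < i}, junk (D j.1)))) ℵ₀) < #↥W :=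
      hsucclt _ (max_lt (max_lt (hθκ i) hUlt) hℵκ)
    set δ := Order.succ (max (max (θ i) (#↥(⋃ j : {j // j < i}, junk (D j.1)))) ℵ₀) with hδ
    have hδreg : δ.IsRegular := Cardinal.isRegular_succ (le_max_right _ _)
    have hδℵ : ℵ₀ ≤ δ := hδreg.aleph0_le
    have hstrat : ∃ ν : Cardinal, ν < #↥W ∧
        δ ≤ #↥({x ∈ W | #↥(W \ cmp x) ≤ ν} \ ⋃ j : {j // j < i}, junk (D j.1)) := by
      by_contra hc
      push_neg at hc
      have hcover : W \ (⋃ j : {j // j < i}, junk (D j.1)) ⊆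
          ⋃ b, ({x ∈ W | #↥(W \ cmp x) ≤ θ b} \ ⋃ j : {j // j < i}, junk (D j.1)) := by
        intro z hz
        obtain ⟨b, hb⟩ := hcof_hit (#↥(W \ cmp z)) (htr z hz.1)
        exact mem_iUnion.2 ⟨b, ⟨⟨hz.1, hb⟩, hz.2⟩⟩
      have h1 : #↥W ≤ #↥(⋃ b, ({x ∈ W | #↥(W \ cmp x) ≤ θ b} \
          ⋃ j : {j // j < i}, junk (D j.1))) := by
        exact hWUκ.symm.le.trans (mk_le_mk_of_subset hcover)
      have h2 := (Cardinal.mk_iUnion_le fun b =>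
          ({x ∈ W | #↥(W \ cmp x) ≤ θ b} \ ⋃ j : {j // j < i}, junk (D j.1))).trans
        (mul_le_mul' le_rfl (ciSup_le' fun b => (hc (θ b) (hθκ b)).le))
      rw [Cardinal.mk_toType, Cardinal.card_ord] at h2
      exact absurd (h1.trans h2) (not_le.2 (Cardinal.mul_lt_of_lt hW hlamκ hδκ))
    obtain ⟨ν, hνκ, hνbig⟩ := hstrat
    obtain ⟨V, hVsub, hVcard⟩ := Cardinal.le_mk_iff_exists_subset.1 hνbig
    have hVℵ : ℵ₀ ≤ #↥V := by rw [hVcard]; exact hδℵ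
    obtain ⟨V', hV'V, hV'card, hV'tr⟩ := shrink hP V hVℵ
    have hV'δ : #↥V' = δ := by rw [hV'card, hVcard]
    obtain ⟨S, hSV', hSchain, hScard⟩ := chain_of_regular V' (by rw [hV'δ]; exact hδreg)
      (fun z hz => by rw [hV'card]; exact hV'tr z hz)
    have hSV : S ⊆ V := hSV'.trans hV'V
    have hSW : S ⊆ W := fun z hz => ((hVsub (hSV hz)).1).1
    have hex : ∃ T, Spec i (⋃ j : {j // j < i}, junk (D j.1)) T := by
      rw [hSpecDef]
      refine ⟨S, hSW, fun y hy => (hVsub (hSV hy)).2, hSchain, ?_, ?_, ⟨ν, hνκ, ?_⟩⟩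
      · rw [hScard, hV'δ, hδ]
        exact ((le_max_left _ _).trans (le_max_left _ _)).trans (Order.le_succ _)
      · rw [hScard, hV'δ]; exact hδκ
      · exact fun z hz => ((hVsub (hSV hz)).1).2
    rw [dif_pos hex]
    exact hex.choose_spec
  have hSpec1 : ∀ i, D i ⊆ W := by
    intro i
    have h := hSpec i
    rw [hSpecDef] at h
    exact h.1
  refine ⟨⋃ i, D i, iUnion_subset hSpec1, ?_, ?_⟩
  · intro a ha b hb hab
    obtain ⟨i, hai⟩ := mem_iUnion.1 ha
    obtain ⟨j, hbj⟩ := mem_iUnion.1 hb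
    have hScmp : ∀ i j, i < j → ∀ a ∈ D i, ∀ b ∈ D j, b ∈ cmp a := by
      intro i j hij a hai b hbj
      have hj := hSpec j
      rw [hSpecDef] at hj
      have hnot := hj.2.1 b hbj
      have hjunkle : junk (D i) ⊆ ⋃ j' : {j' // j' < j}, junk (D j'.1) :=
        subset_iUnion (fun j' : {j' // j' < j} => junk (D j'.1)) ⟨i, hij⟩
      have hb1 : b ∉ W \ cmp a := by
        intro hmem
        refine hnot (hjunkle ?_)
        rw [hjunk]
        exact Or.inr (mem_iUnion.2 ⟨⟨a, hai⟩, hmem⟩)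
      by_contra hcc
      exact hb1 ⟨hj.1 hbj, hcc⟩
    rcases lt_trichotomy i j with h | h | h
    · exact hScmp i j h a hai b hbj
    · subst h
      have hi := hSpec i
      rw [hSpecDef] at hi
      exact hi.2.2.1 hai hbj hab
    · have h1 := hScmp j i h b hbj a hai
      exact h1.symm
  · refine le_antisymm (mk_le_mk_of_subset (iUnion_subset hSpec1)) ?_
    by_contra hc
    obtain ⟨b, hb⟩ := hcof_hit (Order.succ (#↥(⋃ i, D i))) (hsucclt _ (not_le.1 hc))
    have hbig := hSpec b
    rw [hSpecDef] at hbig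
    have h1 : Order.succ (#↥(⋃ i, D i)) ≤ #↥(⋃ i, D i) :=
      (hb.trans hbig.2.2.2.1).trans (mk_le_mk_of_subset (subset_iUnion D b))
    exact absurd h1 (not_le.2 (Order.lt_succ _))

/-- Main combinatorial lemma combining both cases. -/
theorem chain_of_all (hP : IsNarrow P) (W : Set P) (hW : ℵ₀ ≤ #↥W)
    (htr : ∀ x ∈ W, #↥(W \ cmp x) < #↥W) :
    ∃ C : Set P, C ⊆ W ∧ IsChain (· ≤ ·) C ∧ #↥C = #↥W := by
  by_cases hreg : (#↥W).IsRegular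
  · exact chain_of_regular W hreg htr
  · exact chain_of_singular hP W hW hreg htr

end NarrowChainAux

/-- Lemma 4.2: every infinite subset `A` of a narrow poset contains a chain of the same
cardinality as `A`. -/
theorem narrow_infinite_subset_has_chain_of_same_card {P : Type*} [PartialOrder P]
    (hP : IsNarrow P) (A : Set P) (hA : A.Infinite) :
    ∃ C ⊆ A, IsChain (· ≤ ·) C ∧ Cardinal.mk C = Cardinal.mk A := by
  have hℵ : ℵ₀ ≤ #↥A := by
    haveI := hA.to_subtype
    exact Cardinal.aleph0_le_mk ↥A
  obtain ⟨B', hB'A, hB'c, hB'tr⟩ := NarrowChainAux.shrink hP A hℵ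
  have hB'ℵ : ℵ₀ ≤ #↥B' := by rw [hB'c]; exact hℵ
  obtain ⟨C, hCB', hCchain, hCcard⟩ := NarrowChainAux.chain_of_all hP B' hB'ℵ
    (fun x hx => by rw [hB'c]; exact hB'tr x hx)
  exact ⟨C, hCB'.trans hB'A, hCchain, by rw [hCcard, hB'c]⟩
end

section
/- Every narrow partially ordered set is a finite union of directed subsets. -/
/-!
If no finite family from `𝒮` covers the whole type, the complements of the sets covered by such
families form a proper filter, and an ultrafilter refining it contains no member of `𝒮`. So it
suffices that every ultrafilter `U` on a narrow poset contains a directed set.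
Let `T = {a | Ici a ∈ U}`. If `T ∈ U`, any two elements of `T` have a common upper bound in `T`,
so `T` is directed. Otherwise `Tᶜ ∈ U`; a maximal antichain `A ⊆ Tᶜ` is finite and every element
of `Tᶜ` is comparable with one of its elements, so `Iic a ∪ Ici a ∈ U` for some `a ∈ A`.
As `a ∉ T`, this forces the directed set `Iic a` into `U`.
-/

open Set

theorem exists_finite_subset_sUnion_eq_univ_of_forall_ultrafilter {α : Type*}
    (𝒮 : Set (Set α)) (h : ∀ U : Ultrafilter α, ∃ s ∈ 𝒮, s ∈ U) :
    ∃ 𝒟 ⊆ 𝒮, 𝒟.Finite ∧ ⋃₀ 𝒟 = univ := by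
  by_contra hcov
  let F : Filter α := Filter.comk (fun t => ∃ 𝒟 ⊆ 𝒮, 𝒟.Finite ∧ t ⊆ ⋃₀ 𝒟)
    ⟨∅, empty_subset _, finite_empty, empty_subset _⟩
    (fun _ ⟨𝒟, h𝒮, hfin, ht⟩ _ hst => ⟨𝒟, h𝒮, hfin, hst.trans ht⟩)
    (fun _ ⟨𝒟, h𝒮, hfin, hs⟩ _ ⟨𝒟', h𝒮', hfin', ht⟩ =>
      ⟨𝒟 ∪ 𝒟', union_subset h𝒮 h𝒮', hfin.union hfin',
        sUnion_union 𝒟 𝒟' ▸ union_subset_union hs ht⟩)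
  have : F.NeBot := by
    refine ⟨fun hF => hcov ?_⟩
    obtain ⟨𝒟, h𝒮, hfin, h𝒟⟩ : ∃ 𝒟 ⊆ 𝒮, 𝒟.Finite ∧ ∅ᶜ ⊆ ⋃₀ 𝒟 :=
      Filter.empty_mem_iff_bot.2 hF
    exact ⟨𝒟, h𝒮, hfin, univ_subset_iff.1 (compl_empty ▸ h𝒟)⟩
  obtain ⟨s, hs𝒮, hsU⟩ := h (Ultrafilter.of F)
  have hsc : sᶜ ∈ F := ⟨{s}, singleton_subset_iff.2 hs𝒮, finite_singleton s, by simp⟩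
  exact Ultrafilter.compl_mem_iff_notMem.1 (Ultrafilter.of_le F hsc) hsU

theorem exists_isAntichain_subset_biUnion_Iic_union_Ici {P : Type*} [Preorder P] (S : Set P) :
    ∃ A ⊆ S, IsAntichain (· ≤ ·) A ∧ S ⊆ ⋃ a ∈ A, Iic a ∪ Ici a := by
  obtain ⟨A, hAmax⟩ := zorn_subset {A | A ⊆ S ∧ IsAntichain (· ≤ ·) A} fun c hc hchain =>
    ⟨⋃₀ c, ⟨sUnion_subset fun _ hA => (hc hA).1,
      (pairwise_sUnion hchain.directedOn).2 fun _ hA => (hc hA).2⟩,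
      fun _ => subset_sUnion_of_mem⟩
  obtain ⟨hAS, hA⟩ := hAmax.prop
  refine ⟨A, hAS, hA, fun x hx => ?_⟩
  by_contra hx_not
  simp only [mem_iUnion, mem_union, mem_Iic, mem_Ici, not_exists, not_or] at hx_not
  have hins : insert x A ∈ {A | A ⊆ S ∧ IsAntichain (· ≤ ·) A} :=
    ⟨insert_subset hx hAS,
      hA.insert (fun b hb _ => (hx_not b hb).2) (fun b hb _ => (hx_not b hb).1)⟩
  have hxA : x ∈ A := hAmax.eq_of_subset hins (subset_insert x A) ▸ mem_insert x A
  exact (hx_not x hxA).1 le_rfl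

theorem IsNarrow.finite_of_isAntichain {P : Type*} [PartialOrder P] (hP : IsNarrow P)
    {A : Set P} (hA : IsAntichain (· ≤ ·) A) : A.Finite :=
  hP A fun _ ha _ hb hab => ⟨hA ha hb hab, hA hb ha hab.symm⟩

theorem Ultrafilter.directedOn_setOf_Ici_mem {P : Type*} [Preorder P] (U : Ultrafilter P)
    (hT : {a | Ici a ∈ U} ∈ U) : DirectedOn (· ≤ ·) {a | Ici a ∈ U} := by
  intro a ha b hb
  obtain ⟨c, ⟨hac, hbc⟩, hc⟩ := U.nonempty_of_mem (Filter.inter_mem (Filter.inter_mem ha hb) hT)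
  exact ⟨c, hc, hac, hbc⟩

theorem IsNarrow.exists_directedOn_mem_ultrafilter {P : Type*} [PartialOrder P]
    (hP : IsNarrow P) (U : Ultrafilter P) : ∃ s ∈ U, DirectedOn (· ≤ ·) s := by
  set T := {a | Ici a ∈ U}
  by_cases hT : T ∈ U
  · exact ⟨T, hT, U.directedOn_setOf_Ici_mem hT⟩
  obtain ⟨A, hAT, hA, hcover⟩ := exists_isAntichain_subset_biUnion_Iic_union_Ici Tᶜ
  have hU : (⋃ a ∈ A, Iic a ∪ Ici a) ∈ U :=
    Filter.mem_of_superset (Ultrafilter.compl_mem_iff_notMem.2 hT) hcover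
  obtain ⟨a, haA, ha⟩ := (Ultrafilter.finite_biUnion_mem_iff (hP.finite_of_isAntichain hA)).1 hU
  exact ⟨Iic a, (Ultrafilter.union_mem_iff.1 ha).resolve_right (hAT haA), directedOn_le_Iic a⟩

/-- Lemma 4.3: every narrow poset is a finite union of directed subsets. -/
theorem narrow_finite_union_of_directed {P : Type*} [PartialOrder P] (hP : IsNarrow P) :
    ∃ (n : ℕ) (D : Fin n → Set P),
      (∀ i, DirectedOn (· ≤ ·) (D i)) ∧ (⋃ i, D i) = Set.univ := by
  obtain ⟨𝒟, h𝒟, hfin, hcover⟩ := exists_finite_subset_sUnion_eq_univ_of_forall_ultrafilter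
    {s : Set P | DirectedOn (· ≤ ·) s} fun U =>
      let ⟨s, hsU, hs⟩ := hP.exists_directedOn_mem_ultrafilter U
      ⟨s, hs, hsU⟩
  obtain ⟨n, D, hD⟩ := hfin.fin_embedding
  refine ⟨n, D, fun i => h𝒟 (hD ▸ mem_range_self i), ?_⟩
  rw [← sUnion_range, hD, hcover]
end

section
/- Let 𝓐 = 𝓐₀ ∪ ⋯ ∪ 𝓐_{k−1} be a family of sets (k a positive natural number) such that ⋃𝓐 is the union of a chain 𝓓 of sets, where each member of 𝓓 is the union of some nonempty chain of members of 𝓐. Then there exists j < k such that ⋃𝓐 = ⋃𝓐ⱼ. -/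
/-!
Every member `M = ⋃₀ C` of `𝓓` is covered by finitely many families `𝓐ⱼ`, so some `𝓐ⱼ` is cofinal
in the chain `C`, whence `M ⊆ ⋃𝓐ⱼ`. Now the members of `𝓓` are labelled by such `j`, and the same
pigeonhole argument, applied to the chain `𝓓`, yields one `j` with `⋃𝓓 ⊆ ⋃𝓐ⱼ`.
-/

open Set

theorem IsChain.exists_cofinal_of_subset_iUnion {α ι : Type*} [Preorder α] [Finite ι]
    {C : Set α} (S : ι → Set α) (hchain : IsChain (· ≤ ·) C) (hne : C.Nonempty)
    (hcover : C ⊆ ⋃ i, S i) :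
    ∃ i, ∀ c ∈ C, ∃ d ∈ C ∩ S i, c ≤ d := by
  by_contra! h
  choose g hgC hg using h
  have : Nonempty C := hne.to_subtype
  -- the largest of the witnesses `g i` lies in some `S i`, and so lies above `g i`
  obtain ⟨m, hm⟩ := hchain.directedOn.directed_val.finite_le fun i => ⟨g i, hgC i⟩
  obtain ⟨i, hi⟩ := mem_iUnion.1 (hcover m.2)
  exact hg i m ⟨m.2, hi⟩ (hm i)

theorem sUnion_subset_sUnion_of_forall_exists_subset {X : Type*} {C B : Set (Set X)}
    (h : ∀ c ∈ C, ∃ d ∈ B, c ⊆ d) : ⋃₀ C ⊆ ⋃₀ B :=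
  sUnion_subset fun c hc =>
    let ⟨_, hd, hcd⟩ := h c hc
    hcd.trans (subset_sUnion_of_mem hd)

theorem IsChain.exists_sUnion_subset_sUnion {X ι : Type*} [Finite ι] {C : Set (Set X)}
    (S : ι → Set (Set X)) (hchain : IsChain (· ⊆ ·) C) (hne : C.Nonempty)
    (hcover : C ⊆ ⋃ i, S i) :
    ∃ i, ⋃₀ C ⊆ ⋃₀ S i := by
  obtain ⟨i, hi⟩ := hchain.exists_cofinal_of_subset_iUnion S hne hcover
  refine ⟨i, sUnion_subset_sUnion_of_forall_exists_subset fun c hc => ?_⟩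
  obtain ⟨d, ⟨-, hd⟩, hcd⟩ := hi c hc
  exact ⟨d, hd, hcd⟩

theorem union_eq_union_of_piece_general {X : Type*} (k : ℕ)
    (A : Fin k → Set (Set X)) (D : Set (Set X)) (hDne : D.Nonempty)
    (hDchain : IsChain (· ⊆ ·) D)
    (hDunion : ⋃₀ (⋃ j, A j) = ⋃₀ D)
    (hD : ∀ M ∈ D, ∃ C : Set (Set X), C ⊆ (⋃ j, A j) ∧ C.Nonempty ∧
      IsChain (· ⊆ ·) C ∧ M = ⋃₀ C) :
    ∃ j : Fin k, ⋃₀ (⋃ i, A i) = ⋃₀ (A j) := by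
  have hDcover : D ⊆ ⋃ j, 𝒫 (⋃₀ A j) := by
    intro M hM
    obtain ⟨C, hCA, hCne, hCchain, rfl⟩ := hD M hM
    exact mem_iUnion.2 (hCchain.exists_sUnion_subset_sUnion A hCne hCA)
  obtain ⟨j, hj⟩ := hDchain.exists_sUnion_subset_sUnion _ hDne hDcover
  refine ⟨j, (sUnion_subset_sUnion (subset_iUnion A j)).antisymm' ?_⟩
  rw [hDunion]
  exact hj.trans (sUnion_subset fun _ => id)

/-- Lemma 4.4: if `𝓐 = 𝓐₀ ∪ ⋯ ∪ 𝓐_{k-1}` and `⋃𝓐` is the union of a chain `𝓓` of sets,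
each of which is the union of a nonempty chain of members of `𝓐`, then `⋃𝓐 = ⋃𝓐ⱼ` for
some `j < k`. -/
theorem union_eq_union_of_piece {X : Type*} (k : ℕ) (hk : 0 < k)
    (A : Fin k → Set (Set X)) (D : Set (Set X)) (hDne : D.Nonempty)
    (hDchain : IsChain (· ⊆ ·) D)
    (hDunion : ⋃₀ (⋃ j, A j) = ⋃₀ D)
    (hD : ∀ M ∈ D, ∃ C : Set (Set X), C ⊆ (⋃ j, A j) ∧ C.Nonempty ∧
      IsChain (· ⊆ ·) C ∧ M = ⋃₀ C) :
    ∃ j : Fin k, ⋃₀ (⋃ i, A i) = ⋃₀ (A j) :=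
  union_eq_union_of_piece_general k A D hDne hDchain hDunion hD
end

section
/- Let (X, 𝓑) be a ball space such that for every z ∈ X, the poset (𝓑(z), ⊆), where 𝓑(z) := {B ∈ 𝓑 : z ∈ B}, is narrow and admits only countable strictly increasing sequences (there is no strictly increasing ω₁-indexed sequence in (𝓑(z), ⊊)). Then (X, 𝓑) is chain union stable. -/
open Set

section NarrowDefs

/-- A family of sets is narrow (as a poset under inclusion) if it contains no infinite
subfamily of pairwise `⊆`-incomparable sets. -/
def IsNarrowFamily {X : Type*} (F : Set (Set X)) : Prop :=
  ∀ A ⊆ F, (∀ a ∈ A, ∀ b ∈ A, a ≠ b → ¬a ⊆ b ∧ ¬b ⊆ a) → A.Finite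

end NarrowDefs

section BallsAtDef

variable {X : Type*}

/-- The family of balls containing a given point `z`. -/
def ballsAt (B : Set (Set X)) (z : X) : Set (Set X) := {S ∈ B | z ∈ S}

end BallsAtDef

/-!
Let `z` lie in a member `D` of a chain `𝒞 ⊆ cu 𝓑`. The members of `𝒞` above `D` have the same
union as `𝒞`, and, keeping in their witness chains only the balls above one that contains `z`,
they lie in `cu 𝓑(z)`. So it suffices that `cu F` is chain union closed for a narrow family `F`
with no strictly increasing `ω₁`-sequence.

By the partition relation `ω₁ → (ω₁, ω)²`, every `ω₁`-sequence `b` in such an `F` has `i < j`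
with `b j ⊆ b i`. Hence a chain in `cu F` has a countable cofinal subset: otherwise it contains
a strictly increasing `ω₁`-sequence `f`, and balls witnessing `f (i + 1) ⊄ f i` would violate
this. So the union is that of a chain `D₀ ⊂ D₁ ⊂ ⋯` in `cu F`. The countably many balls of a
witness chain of `D (n + 1)` not contained in `D n` form a layer `E n`, and no ball of a later
layer lies inside a ball of an earlier one. Along a non-principal ultrafilter, narrowness forces
every ball of almost every layer to lie below some ball of almost every layer; the balls of these
layers form a countable directed family, which contains a chain with the same union.
-/

open Cardinal Filter

theorem Ordinal.countable_Iio_omega_one_toType (i : (Ordinal.omega 1).ToType) :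
    (Iio i).Countable := by
  rw [← le_aleph0_iff_set_countable, ← Order.lt_succ_iff, succ_aleph0, ← card_omega, ← mk_toType]
  exact mk_Iio_lt i (by rw [mk_toType, card_omega, ord_aleph, Ordinal.type_toType])

instance Ordinal.uncountable_omega_one_toType : Uncountable (Ordinal.omega 1).ToType := by
  rw [← aleph0_lt_mk_iff, mk_toType, card_omega]
  exact aleph0_lt_aleph_one

theorem exists_seq_rel_of_forall_exists_sep {α : Type*} {R : α → α → Prop} (L : Set α → Prop)
    (h : ∀ A, L A → ∃ x ∈ A, L {y ∈ A | R x y}) {A₀ : Set α} (h₀ : L A₀) :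
    ∃ x : ℕ → α, (∀ n, x n ∈ A₀) ∧ ∀ m n, m < n → R (x m) (x n) := by
  choose pt hpt hL using h
  let T : ℕ → Subtype L := fun n =>
    Nat.rec ⟨A₀, h₀⟩ (fun _ A => ⟨{y ∈ A.1 | R (pt A.1 A.2) y}, hL A.1 A.2⟩) n
  have hT : Antitone fun n => (T n).1 := antitone_nat_of_succ_le fun n => sep_subset _ _
  refine ⟨fun n => pt (T n).1 (T n).2, fun n => hT n.zero_le (hpt _ _), fun m n hmn => ?_⟩
  exact (hT (Nat.succ_le_of_lt hmn) (hpt (T n).1 (T n).2)).2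

theorem DirectedOn.exists_monotone_forall_le {α : Type*} [Preorder α] {s : Set α}
    (hs : DirectedOn (· ≤ ·) s) (hsc : s.Countable) (hne : s.Nonempty) :
    ∃ c : ℕ → α, (∀ n, c n ∈ s) ∧ Monotone c ∧ ∀ a ∈ s, ∃ n, a ≤ c n := by
  have := hsc.toEncodable
  have : Inhabited s := ⟨⟨_, hne.some_mem⟩⟩
  have hd : Directed (· ≤ ·) (Subtype.val : s → α) := directedOn_iff_directed.1 hs
  exact ⟨fun n => hd.sequence _ n, fun n => (hd.sequence _ n).2, hd.sequence_mono,
    fun a ha => ⟨_, hd.le_sequence ⟨a, ha⟩⟩⟩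

theorem Monotone.exists_iUnion_eq_or_strictMono {X : Type*} {c : ℕ → Set X} (hc : Monotone c) :
    (∃ n, ⋃ k, c k = c n) ∨ ∃ g : ℕ → ℕ, StrictMono (c ∘ g) ∧ ⋃ n, c (g n) = ⋃ k, c k := by
  obtain ⟨g, hstrict | hconst⟩ := exists_increasing_or_nonincreasing_subseq (· < ·) c
  · refine Or.inr ⟨g, fun m n hmn => hstrict m n hmn, (iUnion_mono' fun n => ⟨g n, le_rfl⟩).antisymm
      (iUnion_mono fun k => hc (g.strictMono.id_le k))⟩
  · have hg : ∀ n, c (g n) = c (g 0) := fun n => by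
      rcases n.eq_zero_or_pos with rfl | hn
      · rfl
      · exact ((hc (g.monotone n.zero_le)).eq_of_not_lt (hconst 0 n hn)).symm
    refine Or.inl ⟨g 0, (iUnion_subset fun k => ?_).antisymm (subset_iUnion c _)⟩
    exact (hc (g.strictMono.id_le k)).trans (hg k).le

theorem eventually_hyperfilter_gt (n : ℕ) : ∀ᶠ m in hyperfilter ℕ, n < m :=
  (hyperfilter_le_cofinite.trans Nat.cofinite_eq_atTop.le) (eventually_gt_atTop n)

section OmegaOneLike

variable {ι : Type*} [LinearOrder ι]

theorem noMaxOrder_of_countable_Iio [Uncountable ι] (hι : ∀ i : ι, (Iio i).Countable) :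
    NoMaxOrder ι where
  exists_gt i := by
    obtain ⟨j, -, hj⟩ := sdiff_nonempty.2 fun h => not_countable_univ (((hι i).insert i).mono h)
    rw [Iio_insert, mem_Iic] at hj
    exact ⟨j, lt_of_not_ge hj⟩

variable [WellFoundedLT ι]

theorem exists_forall_mem_image_Iio {β : Type*} (hι : ∀ i : ι, (Iio i).Countable) {A : Set β}
    {Q : Set β → β → Prop} (h : ∀ s ⊆ A, s.Countable → ∃ b ∈ A, Q s b) :
    ∃ f : ι → β, ∀ i, f i ∈ A ∧ Q (f '' Iio i) (f i) := by
  obtain ⟨b₀, -⟩ := h ∅ (empty_subset A) countable_empty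
  have : Nonempty β := ⟨b₀⟩
  choose! next hnextA hnextQ using h
  let f : ι → β := wellFounded_lt.fix fun i rec => next (range fun j : Iio i => rec j j.2)
  have hf : ∀ i, f i = next (f '' Iio i) := fun i => by
    rw [image_eq_range]
    exact wellFounded_lt.fix_eq _ i
  have hfA : ∀ i, f i ∈ A := fun i => by
    induction i using WellFoundedLT.induction with
    | ind i ih =>
      rw [hf]
      exact hnextA _ (image_subset_iff.2 ih) ((hι i).image f)
  refine ⟨f, fun i => ⟨hfA i, ?_⟩⟩
  rw [hf i]
  exact hnextQ _ (image_subset_iff.2 fun j _ => hfA j) ((hι i).image f)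

theorem exists_strictMono_forall_not_rel (hι : ∀ i : ι, (Iio i).Countable) {R : ι → ι → Prop}
    {A : Set ι} (hA : ¬A.Countable) (hR : ∀ x ∈ A, {y ∈ A | R x y}.Countable) :
    ∃ g : ι → ι, StrictMono g ∧ ∀ i j, i < j → ¬R (g i) (g j) := by
  obtain ⟨g, hg⟩ := exists_forall_mem_image_Iio hι (A := A)
    (Q := fun s y => ∀ x ∈ s, x < y ∧ ¬R x y) fun s hsA hs => by
      have hbad : ((⋃ x ∈ s, {y ∈ A | R x y}) ∪ ⋃ x ∈ s, Iic x).Countable :=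
        (hs.biUnion fun x hx => hR x (hsA hx)).union
          (hs.biUnion fun x _ => by rw [← Iio_insert]; exact (hι x).insert x)
      obtain ⟨y, hyA, hy⟩ := sdiff_nonempty.2 fun hsub => hA (hbad.mono hsub)
      simp only [mem_union, mem_iUnion₂, mem_sep_iff, mem_Iic, not_or, not_exists] at hy
      exact ⟨y, hyA, fun x hx => ⟨lt_of_not_ge (hy.2 x hx), fun hxy => hy.1 x hx ⟨hyA, hxy⟩⟩⟩
  exact ⟨g, fun i j hij => ((hg j).2 _ (mem_image_of_mem g hij)).1,
    fun i j hij => ((hg j).2 _ (mem_image_of_mem g hij)).2⟩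

theorem exists_strictMono_forall_not_rel_or_exists_seq_rel [Uncountable ι]
    (hι : ∀ i : ι, (Iio i).Countable) (R : ι → ι → Prop) :
    (∃ g : ι → ι, StrictMono g ∧ ∀ i j, i < j → ¬R (g i) (g j)) ∨
      ∃ x : ℕ → ι, ∀ m n, m < n → R (x m) (x n) := by
  by_cases h : ∀ A : Set ι, ¬A.Countable → ∃ x ∈ A, ¬{y ∈ A | R x y}.Countable
  · obtain ⟨x, -, hx⟩ := exists_seq_rel_of_forall_exists_sep _ h not_countable_univ
    exact Or.inr ⟨x, hx⟩
  · push Not at h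
    obtain ⟨A, hA, hR⟩ := h
    exact Or.inl (exists_strictMono_forall_not_rel hι hA hR)

end OmegaOneLike

section Families

variable {X : Type*} {F : Set (Set X)}

theorem subset_cu (F : Set (Set X)) : F ⊆ cu F := fun U hU =>
  ⟨{U}, singleton_subset_iff.2 hU, singleton_nonempty U, subsingleton_singleton.isChain,
    (sUnion_singleton U).symm⟩

theorem cu_mono {G : Set (Set X)} (h : F ⊆ G) : cu F ⊆ cu G := fun _ ⟨C, hC, hne, hch, hU⟩ =>
  ⟨C, hC.trans h, hne, hch, hU⟩

theorem exists_mem_subset_of_mem_cu {U : Set X} (hU : U ∈ cu F) {x : X} (hx : x ∈ U) :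
    ∃ b ∈ F, x ∈ b ∧ b ⊆ U := by
  obtain ⟨C, hCF, -, -, rfl⟩ := hU
  obtain ⟨b, hb, hxb⟩ := hx
  exact ⟨b, hCF hb, hxb, subset_sUnion_of_mem hb⟩

theorem chainUnionStable_iff :
    ChainUnionStable F ↔ ∀ C ⊆ cu F, C.Nonempty → IsChain (· ⊆ ·) C → ⋃₀ C ∈ cu F := by
  refine ⟨fun h C hC hne hch => h ▸ ⟨C, hC, hne, hch, rfl⟩, fun h => ?_⟩
  refine (subset_cu (cu F)).antisymm' ?_
  rintro _ ⟨C, hC, hne, hch, rfl⟩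
  exact h C hC hne hch

theorem IsChain.sUnion_sep_superset_eq {C : Set (Set X)} (hC : IsChain (· ⊆ ·) C) {b : Set X}
    (hb : b ∈ C) : ⋃₀ {S ∈ C | b ⊆ S} = ⋃₀ C := by
  refine (sUnion_mono (sep_subset _ _)).antisymm ?_
  rintro x ⟨S, hS, hxS⟩
  rcases hC.total hS hb with hSb | hbS
  · exact ⟨b, ⟨hb, subset_rfl⟩, hSb hxS⟩
  · exact ⟨S, ⟨hS, hbS⟩, hxS⟩

theorem mem_cu_ballsAt {B : Set (Set X)} {U : Set X} (hU : U ∈ cu B) {z : X} (hz : z ∈ U) :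
    U ∈ cu (ballsAt B z) := by
  obtain ⟨C, hCB, -, hC, rfl⟩ := hU
  obtain ⟨b, hb, hzb⟩ := hz
  exact ⟨{S ∈ C | b ⊆ S}, fun S hS => ⟨hCB hS.1, hS.2 hzb⟩, ⟨b, hb, subset_rfl⟩,
    hC.mono (sep_subset _ _), (hC.sUnion_sep_superset_eq hb).symm⟩

theorem chainUnionStable_of_forall_ballsAt {B : Set (Set X)}
    (h : ∀ z, ChainUnionStable (ballsAt B z)) : ChainUnionStable B := by
  rw [chainUnionStable_iff]
  intro C hCB hne hC
  rcases (⋃₀ C).eq_empty_or_nonempty with hempty | ⟨z, D, hD, hz⟩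
  · obtain ⟨D, hD⟩ := hne
    rw [hempty, ← subset_empty_iff.1 (hempty ▸ subset_sUnion_of_mem hD)]
    exact hCB hD
  · rw [← hC.sUnion_sep_superset_eq hD]
    refine cu_mono (sep_subset _ _) ((chainUnionStable_iff.1 (h z)) _ ?_ ⟨D, hD, subset_rfl⟩
      (hC.mono (sep_subset _ _)))
    exact fun S hS => mem_cu_ballsAt (hCB hS.1) (hS.2 hz)

theorem IsNarrowFamily.exists_lt_subset_or_subset (hF : IsNarrowFamily F) {e : ℕ → Set X}
    (he : ∀ n, e n ∈ F) : ∃ m n, m < n ∧ (e m ⊆ e n ∨ e n ⊆ e m) := by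
  by_contra! h
  have hinj : e.Injective := .of_lt_imp_ne fun m n hmn heq => (h m n hmn).1 heq.subset
  refine infinite_range_of_injective hinj (hF _ (range_subset_iff.2 he) ?_)
  rintro _ ⟨m, rfl⟩ _ ⟨n, rfl⟩ hne
  rcases lt_trichotomy m n with hmn | rfl | hnm
  · exact h m n hmn
  · exact absurd rfl hne
  · exact (h n m hnm).symm

variable {ι : Type*} [LinearOrder ι] [WellFoundedLT ι]

theorem IsNarrowFamily.exists_lt_subset [Uncountable ι] (hι : ∀ i : ι, (Iio i).Countable)
    (hF : IsNarrowFamily F) (hshort : ∀ f : ι → Set X, (∀ i, f i ∈ F) → ¬StrictMono f)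
    {b : ι → Set X} (hb : ∀ i, b i ∈ F) : ∃ i j, i < j ∧ b j ⊆ b i := by
  by_contra! hfwd
  rcases exists_strictMono_forall_not_rel_or_exists_seq_rel hι
    (fun i j => ¬b i ⊆ b j ∧ ¬b j ⊆ b i) with ⟨g, hg, hcomp⟩ | ⟨x, hx⟩
  · refine hshort (b ∘ g) (fun i => hb _) fun i j hij => ?_
    have hnot := hfwd _ _ (hg hij)
    exact ssubset_of_subset_not_subset (by simpa [hnot] using hcomp i j hij) hnot
  · obtain ⟨m, n, hmn, hcomp⟩ := hF.exists_lt_subset_or_subset fun n => hb (x n)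
    exact hcomp.elim (hx m n hmn).1 (hx m n hmn).2

theorem IsChain.exists_countable_cofinal (hι : ∀ i : ι, (Iio i).Countable) {C : Set (Set X)}
    (hC : IsChain (· ⊆ ·) C) (hshort : ∀ f : ι → Set X, (∀ i, f i ∈ C) → ¬StrictMono f) :
    ∃ s ⊆ C, s.Countable ∧ ∀ U ∈ C, ∃ a ∈ s, U ⊆ a := by
  by_contra! h
  obtain ⟨f, hf⟩ :=
    exists_forall_mem_image_Iio hι (Q := fun (s : Set (Set X)) U => ∀ a ∈ s, ¬U ⊆ a) h
  refine hshort f (fun i => (hf i).1) fun i j hij => ?_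
  have hnot : ¬f j ⊆ f i := (hf j).2 _ (mem_image_of_mem f hij)
  exact ssubset_of_subset_not_subset ((hC.total (hf i).1 (hf j).1).resolve_right hnot) hnot

theorem exists_countable_cofinal_of_subset_cu [Uncountable ι] (hι : ∀ i : ι, (Iio i).Countable)
    (hF : IsNarrowFamily F) (hshort : ∀ f : ι → Set X, (∀ i, f i ∈ F) → ¬StrictMono f)
    {C : Set (Set X)} (hCF : C ⊆ cu F) (hC : IsChain (· ⊆ ·) C) :
    ∃ s ⊆ C, s.Countable ∧ ∀ U ∈ C, ∃ a ∈ s, U ⊆ a := by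
  refine hC.exists_countable_cofinal hι fun f hfC hf => ?_
  have := noMaxOrder_of_countable_Iio hι
  let _ := SuccOrder.ofLinearWellFoundedLT ι
  have hwitness : ∀ i, ∃ x, ∃ b ∈ F, x ∈ b ∧ b ⊆ f (Order.succ i) ∧ x ∉ f i := by
    intro i
    obtain ⟨x, hx, hxi⟩ := exists_of_ssubset (hf (Order.lt_succ i))
    obtain ⟨b, hbF, hxb, hbf⟩ := exists_mem_subset_of_mem_cu (hCF (hfC _)) hx
    exact ⟨x, b, hbF, hxb, hbf, hxi⟩
  choose x b hbF hxb hbf hxf using hwitness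
  obtain ⟨i, j, hij, hji⟩ := hF.exists_lt_subset hι hshort hbF
  exact hxf j (hf.monotone (Order.succ_le_of_lt hij) (hbf i (hji (hxb j))))

end Families

section Layers

variable {X : Type*} {F : Set (Set X)} {E : ℕ → Set (Set X)}

theorem eventually_forall_eventually_exists_superset (hF : IsNarrowFamily F)
    (hEF : ∀ n, E n ⊆ F) (hrank : ∀ m n, m < n → ∀ e ∈ E m, ∀ e' ∈ E n, ¬e' ⊆ e) :
    ∀ᶠ n in hyperfilter ℕ, ∀ t ∈ E n, ∀ᶠ m in hyperfilter ℕ, ∃ e ∈ E m, t ⊆ e := by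
  by_contra h
  simp only [← Ultrafilter.eventually_not, not_forall, exists_prop, not_exists, not_and] at h
  set Y := {n | ∃ t ∈ E n, ∀ᶠ m in hyperfilter ℕ, ∀ e ∈ E m, ¬t ⊆ e}
  choose! w hwE hw using fun n (hn : n ∈ Y) => hn
  have hstep : ∀ A, A ∈ hyperfilter ℕ ∧ A ⊆ Y → ∃ n ∈ A,
      {m ∈ A | n < m ∧ ∀ e ∈ E m, ¬w n ⊆ e} ∈ hyperfilter ℕ ∧
        {m ∈ A | n < m ∧ ∀ e ∈ E m, ¬w n ⊆ e} ⊆ Y := by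
    rintro A ⟨hA, hAY⟩
    obtain ⟨n, hn⟩ := Ultrafilter.nonempty_of_mem hA
    exact ⟨n, hn, inter_mem hA ((eventually_hyperfilter_gt n).and (hw n (hAY hn))),
      fun m hm => hAY hm.1⟩
  obtain ⟨x, hxY, hx⟩ := exists_seq_rel_of_forall_exists_sep _ hstep ⟨h, subset_rfl⟩
  obtain ⟨m, n, hmn, hcomp⟩ := hF.exists_lt_subset_or_subset fun k => hEF _ (hwE _ (hxY k))
  exact hcomp.elim ((hx m n hmn).2 _ (hwE _ (hxY n)))
    (hrank _ _ (hx m n hmn).1 _ (hwE _ (hxY m)) _ (hwE _ (hxY n)))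

theorem iUnion_sUnion_mem_cu_of_layers (hF : IsNarrowFamily F) (hEF : ∀ n, E n ⊆ F)
    (hE : ∀ n, IsChain (· ⊆ ·) (E n)) (hEc : ∀ n, (E n).Countable) (hne : ∀ n, (E n).Nonempty)
    (hmono : Monotone fun n => ⋃₀ E n)
    (hrank : ∀ m n, m < n → ∀ e ∈ E m, ∀ e' ∈ E n, ¬e' ⊆ e) :
    ⋃ n, ⋃₀ E n ∈ cu F := by
  set Z := {n | ∀ t ∈ E n, ∀ᶠ m in hyperfilter ℕ, ∃ e ∈ E m, t ⊆ e}
  have hZ : ∀ᶠ n in hyperfilter ℕ, n ∈ Z :=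
    eventually_forall_eventually_exists_superset hF hEF hrank
  set G := ⋃ n ∈ Z, E n
  have hG : DirectedOn (· ⊆ ·) G := by
    simp only [G, DirectedOn, mem_iUnion₂]
    rintro a ⟨m, hm, ha⟩ b ⟨n, hn, hb⟩
    obtain ⟨l, hl, ⟨e, he, hae⟩, e', he', hbe'⟩ := (hZ.and ((hm a ha).and (hn b hb))).exists
    obtain ⟨e'', he'', hee'', he'e''⟩ := (hE l).directedOn e he e' he'
    exact ⟨e'', ⟨l, hl, he''⟩, hae.trans hee'', hbe'.trans he'e''⟩
  have hGF : G ⊆ F := iUnion₂_subset fun n _ => hEF n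
  obtain ⟨n₀, hn₀⟩ := Ultrafilter.nonempty_of_mem hZ
  obtain ⟨c, hcG, hc, hcov⟩ := hG.exists_monotone_forall_le
    ((to_countable Z).biUnion fun n _ => hEc n) ((hne n₀).mono (subset_biUnion_of_mem hn₀))
  have hcU : ⋃ k, c k = ⋃ n, ⋃₀ E n := by
    refine (iUnion_subset fun k => ?_).antisymm (iUnion_subset fun n => ?_)
    · obtain ⟨n, -, hn⟩ := mem_iUnion₂.1 (hcG k)
      exact (subset_sUnion_of_mem hn).trans (subset_iUnion (fun n => ⋃₀ E n) n)
    · obtain ⟨m, hm, hnm⟩ := (hZ.and (eventually_hyperfilter_gt n)).exists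
      refine (hmono hnm.le).trans (sUnion_subset fun e he => ?_)
      obtain ⟨k, hk⟩ := hcov e (mem_iUnion₂.2 ⟨m, hm, he⟩)
      exact hk.trans (subset_iUnion c k)
  exact hcU ▸ ⟨range c, range_subset_iff.2 fun k => hGF (hcG k), range_nonempty c,
    hc.isChain_range, (sUnion_range c).symm⟩

variable {ι : Type*} [LinearOrder ι] [WellFoundedLT ι]

theorem exists_countable_layer_of_mem_cu (hι : ∀ i : ι, (Iio i).Countable)
    (hshort : ∀ f : ι → Set X, (∀ i, f i ∈ F) → ¬StrictMono f) {U V : Set X} (hU : U ∈ cu F)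
    (hVU : V ⊂ U) :
    ∃ E ⊆ F, IsChain (· ⊆ ·) E ∧ E.Countable ∧ E.Nonempty ∧ ⋃₀ E = U ∧ ∀ e ∈ E, ¬e ⊆ V := by
  obtain ⟨C, hCF, -, hC, rfl⟩ := hU
  obtain ⟨x, ⟨b, hb, hxb⟩, hxV⟩ := exists_of_ssubset hVU
  have hC' : IsChain (· ⊆ ·) {S ∈ C | b ⊆ S} := hC.mono (sep_subset _ _)
  obtain ⟨s, hsC, hsc, hcof⟩ :=
    hC'.exists_countable_cofinal hι fun f hf => hshort f fun i => hCF (hf i).1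
  obtain ⟨a, has, -⟩ := hcof b ⟨hb, subset_rfl⟩
  refine ⟨s, fun S hS => hCF (hsC hS).1, hC'.mono hsC, hsc, ⟨a, has⟩, ?_,
    fun e he heV => hxV (heV ((hsC he).2 hxb))⟩
  rw [← hC.sUnion_sep_superset_eq hb]
  refine (sUnion_mono hsC).antisymm (sUnion_subset fun S hS => ?_)
  obtain ⟨a, has, hSa⟩ := hcof S hS
  exact hSa.trans (subset_sUnion_of_mem has)

theorem iUnion_mem_cu_of_strictMono (hι : ∀ i : ι, (Iio i).Countable) (hF : IsNarrowFamily F)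
    (hshort : ∀ f : ι → Set X, (∀ i, f i ∈ F) → ¬StrictMono f) {D : ℕ → Set X}
    (hD : StrictMono D) (hDF : ∀ n, D n ∈ cu F) : ⋃ n, D n ∈ cu F := by
  choose E hEF hE hEc hne hEU hED using fun n =>
    exists_countable_layer_of_mem_cu hι hshort (hDF (n + 1)) (hD n.lt_succ_self)
  have hmono : Monotone fun n => ⋃₀ E n := fun m n hmn => by
    simp only [hEU]
    exact hD.monotone (by omega)
  have hrank : ∀ m n, m < n → ∀ e ∈ E m, ∀ e' ∈ E n, ¬e' ⊆ e := fun m n hmn e he e' he' he'e =>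
    hED n e' he' (he'e.trans ((subset_sUnion_of_mem he).trans ((hEU m).le.trans (hD.monotone hmn))))
  have := iUnion_sUnion_mem_cu_of_layers hF hEF hE hEc hne hmono hrank
  simp only [hEU] at this
  rwa [hD.monotone.iUnion_nat_add 1] at this

theorem chainUnionStable_of_narrow_short [Uncountable ι] (hι : ∀ i : ι, (Iio i).Countable)
    (hF : IsNarrowFamily F) (hshort : ∀ f : ι → Set X, (∀ i, f i ∈ F) → ¬StrictMono f) :
    ChainUnionStable F := by
  rw [chainUnionStable_iff]
  intro C hCF hne hC
  obtain ⟨s, hsC, hsc, hcof⟩ := exists_countable_cofinal_of_subset_cu hι hF hshort hCF hC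
  obtain ⟨U, hU⟩ := hne
  obtain ⟨a, has, -⟩ := hcof U hU
  obtain ⟨c, hcs, hc, hcov⟩ := (hC.mono hsC).directedOn.exists_monotone_forall_le hsc ⟨a, has⟩
  have hCc : ⋃₀ C = ⋃ n, c n := by
    refine (sUnion_subset fun S hS => ?_).antisymm
      (iUnion_subset fun n => subset_sUnion_of_mem (hsC (hcs n)))
    obtain ⟨a, has, hSa⟩ := hcof S hS
    obtain ⟨n, han⟩ := hcov a has
    exact hSa.trans (han.trans (subset_iUnion c n))
  rw [hCc]
  rcases hc.exists_iUnion_eq_or_strictMono with ⟨n, hn⟩ | ⟨g, hg, hgU⟩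
  · exact hn ▸ hCF (hsC (hcs n))
  · exact hgU ▸ iUnion_mem_cu_of_strictMono hι hF hshort hg fun n => hCF (hsC (hcs (g n)))

end Layers

theorem narrow_short_ballsAt_chainUnionStable_general {X : Type*}
    (B : Set (Set X))
    (hnarrow : ∀ z : X, IsNarrowFamily (ballsAt B z))
    (hshort : ∀ z : X, ¬∃ f : (Ordinal.omega 1).ToType → Set X,
      (∀ i, f i ∈ ballsAt B z) ∧ ∀ i j, i < j → f i ⊂ f j) :
    ChainUnionStable B :=
  chainUnionStable_of_forall_ballsAt fun z =>
    chainUnionStable_of_narrow_short Ordinal.countable_Iio_omega_one_toType (hnarrow z)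
      fun f hf hmono => hshort z ⟨f, hf, fun _ _ hij => hmono hij⟩

/-- Theorem 4.5: if for every `z ∈ X` the poset `(𝓑(z), ⊆)` is narrow and admits no strictly
increasing `ω₁`-indexed sequence, then `(X, 𝓑)` is chain union stable. -/
theorem narrow_short_ballsAt_chainUnionStable {X : Type*} [Nonempty X]
    (B : Set (Set X)) (hball : IsBallSpace B)
    (hnarrow : ∀ z : X, IsNarrowFamily (ballsAt B z))
    (hshort : ∀ z : X, ¬∃ f : (Ordinal.omega 1).ToType → Set X,
      (∀ i, f i ∈ ballsAt B z) ∧ ∀ i j, i < j → f i ⊂ f j) :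
    ChainUnionStable B :=
  narrow_short_ballsAt_chainUnionStable_general B hnarrow hshort
end

section
/- Let (X, u) be an ultrametric space with countable narrow value set Γ, and let (X, 𝓑_u) be its ultrametric ball space. Then for each z ∈ X, the poset (𝓑_u(z), ⊆), where 𝓑_u(z) := {B ∈ 𝓑_u : z ∈ B}, is narrow and admits only countable strictly increasing sequences (there is no strictly increasing ω₁-indexed sequence in (𝓑_u(z), ⊊)). -/
open Set

/-- Lemma 4.6: in an ultrametric ball space over a countable narrow value set, for each
`z ∈ X` the poset `(𝓑_u(z), ⊆)` is narrow and admits no strictly increasing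
`ω₁`-indexed sequence. -/
theorem uball_ballsAt_narrow_and_short {X Γ : Type*}
    [PartialOrder Γ] [OrderBot Γ] [Countable Γ] (hnarrow : IsNarrow Γ)
    (u : X → X → Γ) (hu : IsUltrametric u) (z : X) :
    IsNarrowFamily (ballsAt (uballSpace u) z) ∧
    ¬∃ f : (Ordinal.omega 1).ToType → Set X,
      (∀ i, f i ∈ ballsAt (uballSpace u) z) ∧ ∀ i j, i < j → f i ⊂ f j := by
  classical
  -- the "sphere" around z of radius γ
  set S : Γ → Set X := fun γ => {w | u z w ≤ γ} with hS
  have key : ∀ B ∈ ballsAt (uballSpace u) z, ∃ γ, B = S γ := by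
    rintro B ⟨⟨x, y, rfl⟩, hzB⟩
    refine ⟨u x y, ?_⟩
    have hxz : u x z ≤ u x y := hzB
    have hzx : u z x ≤ u x y := (hu.2.2 z x) ▸ hxz
    ext w
    constructor
    · intro hw
      exact hu.2.1 z x w _ hzx hw
    · intro hw
      exact hu.2.1 x z w _ hxz hw
  have Smono : ∀ γ δ : Γ, γ ≤ δ → S γ ⊆ S δ := fun γ δ h w hw => le_trans hw h
  -- choice function
  set g : Set X → Γ := fun B => if h : ∃ γ, B = S γ then h.choose else ⊥ with hg
  have gspec : ∀ B ∈ ballsAt (uballSpace u) z, B = S (g B) := by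
    intro B hB
    show B = S (if h : ∃ γ, B = S γ then h.choose else ⊥)
    rw [dif_pos (key B hB)]
    exact (key B hB).choose_spec
  constructor
  · intro A hA hanti
    have hinj : Set.InjOn g A := by
      intro a ha b hb hab
      rw [gspec a (hA ha), gspec b (hA hb), hab]
    have him : (g '' A).Finite := by
      apply hnarrow
      rintro _ ⟨a, ha, rfl⟩ _ ⟨b, hb, rfl⟩ hne
      have hab : a ≠ b := fun h => hne (by rw [h])
      constructor
      · intro hle
        exact (hanti a ha b hb hab).1
          ((gspec a (hA ha)) ▸ (gspec b (hA hb)) ▸ Smono _ _ hle)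
      · intro hle
        exact (hanti a ha b hb hab).2
          ((gspec b (hA hb)) ▸ (gspec a (hA ha)) ▸ Smono _ _ hle)
    exact Set.Finite.of_finite_image him hinj
  · rintro ⟨f, hf, hmono⟩
    have hFinj : Function.Injective (fun i => g (f i)) := by
      intro i j hij
      simp only at hij
      by_contra hne
      rcases lt_or_gt_of_ne hne with h | h
      · exact (hmono i j h).ne
          ((gspec (f i) (hf i)).trans (by rw [hij]; exact (gspec (f j) (hf j)).symm))
      · exact (hmono j i h).ne
          ((gspec (f j) (hf j)).trans (by rw [← hij]; exact (gspec (f i) (hf i)).symm))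
    have : Countable (Ordinal.omega 1).ToType := hFinj.countable
    have huncount : ¬ Countable (Ordinal.omega 1).ToType := by
      rw [← Cardinal.mk_le_aleph0_iff, Cardinal.mk_toType, Ordinal.card_omega]
      exact not_le.mpr Cardinal.aleph0_lt_aleph_one
    exact huncount this
end

section
/- Let (X, 𝓑) be a chain regular ball space with an ultradiameter δ : 𝓑 → Γ such that the poset Γ is up-countable, i.e., for every p ∈ Γ the set {x ∈ Γ : p < x} is countable. Then (X, 𝓑) is chain union stable. -/
open Set

section UltradiameterDef

variable {X : Type*} {Γ : Type*}

/-- An ultradiameter on a ball space `(X, 𝓑)`: a function into a poset which is increasing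
with respect to inclusion and satisfies condition (U): if `δ B₀ ≤ δ B₁` and `B₀ ∩ B₁ ≠ ∅`
then `B₀ ⊆ B₁`. -/
def IsUltradiameter [PartialOrder Γ] (B : Set (Set X)) (δ : Set X → Γ) : Prop :=
  (∀ B₀ ∈ B, ∀ B₁ ∈ B, B₀ ⊆ B₁ → δ B₀ ≤ δ B₁) ∧
  (∀ B₀ ∈ B, ∀ B₁ ∈ B, δ B₀ ≤ δ B₁ → (B₀ ∩ B₁).Nonempty → B₀ ⊆ B₁)

end UltradiameterDef

/-- A countable nonempty directed family of sets is the union of a chain from the family. -/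
lemma exists_chain_of_countable_directed {X : Type*} (S : Set (Set X))
    (hc : S.Countable) (hne : S.Nonempty)
    (hdir : ∀ A ∈ S, ∀ A' ∈ S, ∃ C ∈ S, A ⊆ C ∧ A' ⊆ C) :
    ∃ C : Set (Set X), C ⊆ S ∧ C.Nonempty ∧ IsChain (· ⊆ ·) C ∧ ⋃₀ C = ⋃₀ S := by
  obtain ⟨f, rfl⟩ := hc.exists_eq_range hne
  have key : ∀ n m : ℕ, ∃ k, f n ⊆ f k ∧ f m ⊆ f k := by
    intro n m
    obtain ⟨C, ⟨k, rfl⟩, h1, h2⟩ := hdir (f n) ⟨n, rfl⟩ (f m) ⟨m, rfl⟩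
    exact ⟨k, h1, h2⟩
  choose u hu1 hu2 using key
  let g : ℕ → ℕ := fun n => Nat.rec 0 (fun n gn => u gn (n + 1)) n
  have hgs : ∀ n, g (n + 1) = u (g n) (n + 1) := fun n => rfl
  have hmono : Monotone (fun n => f (g n)) := by
    apply monotone_nat_of_le_succ
    intro n
    rw [hgs]
    exact hu1 _ _
  have hcov : ∀ n, f n ⊆ f (g n) := by
    intro n
    cases n with
    | zero => exact subset_rfl
    | succ n => rw [hgs]; exact hu2 _ _
  refine ⟨Set.range (fun n => f (g n)), ?_, ⟨f (g 0), ⟨0, rfl⟩⟩, ?_, ?_⟩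
  · rintro _ ⟨n, rfl⟩; exact ⟨g n, rfl⟩
  · rintro _ ⟨n, rfl⟩ _ ⟨m, rfl⟩ _
    rcases le_total n m with h | h
    · exact Or.inl (hmono h)
    · exact Or.inr (hmono h)
  · apply subset_antisymm
    · apply sUnion_subset
      rintro _ ⟨n, rfl⟩
      exact subset_sUnion_of_mem ⟨g n, rfl⟩
    · apply sUnion_subset
      rintro _ ⟨n, rfl⟩
      exact (hcov n).trans (subset_sUnion_of_mem ⟨n, rfl⟩)

/-- Theorem 5.1: a chain regular ball space with an ultradiameter into an up-countable poset
is chain union stable. -/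
theorem chainRegular_ultradiameter_upCountable_chainUnionStable {X Γ : Type*} [Nonempty X]
    [PartialOrder Γ] (B : Set (Set X)) (hball : IsBallSpace B)
    (hreg : ChainRegular B) (δ : Set X → Γ) (hδ : IsUltradiameter B δ)
    (hup : ∀ p : Γ, {x : Γ | p < x}.Countable) :
    ChainUnionStable B := by
  unfold ChainUnionStable ChainUnionClosed
  apply Set.Subset.antisymm
  · rintro U ⟨𝒟, hDcu, hDne, hDchain, rfl⟩
    -- The family of all balls contained in some member of the chain 𝒟
    set S : Set (Set X) := {A | A ∈ B ∧ ∃ D ∈ 𝒟, A ⊆ D} with hSdef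
    have hSB : S ⊆ B := fun A hA => hA.1
    -- S has the same union as 𝒟
    have hSU : ⋃₀ S = ⋃₀ 𝒟 := by
      apply subset_antisymm
      · apply sUnion_subset
        rintro A ⟨_, D, hD, hAD⟩
        exact hAD.trans (subset_sUnion_of_mem hD)
      · apply sUnion_subset
        intro D hD
        obtain ⟨C, hCB, hCne, hCchain, rfl⟩ := hDcu hD
        apply sUnion_subset
        intro A hA
        refine subset_sUnion_of_mem ⟨hCB hA, ⋃₀ C, hD, subset_sUnion_of_mem hA⟩
    -- S is nonempty
    have hSne : S.Nonempty := by
      obtain ⟨D, hD⟩ := hDne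
      obtain ⟨C, hCB, ⟨A, hA⟩, hCchain, rfl⟩ := hDcu hD
      exact ⟨A, hCB hA, ⋃₀ C, hD, subset_sUnion_of_mem hA⟩
    -- S is directed
    have hdir : ∀ A ∈ S, ∀ A' ∈ S, ∃ C ∈ S, A ⊆ C ∧ A' ⊆ C := by
      rintro A ⟨hAB, D₀, hD₀, hAD₀⟩ A' ⟨hA'B, D₁, hD₁, hA'D₁⟩
      -- the larger of D₀, D₁ contains both A and A'
      obtain ⟨D, hD, hAD, hA'D⟩ : ∃ D ∈ 𝒟, A ⊆ D ∧ A' ⊆ D := by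
        rcases hDchain.total hD₀ hD₁ with h | h
        · exact ⟨D₁, hD₁, hAD₀.trans h, hA'D₁⟩
        · exact ⟨D₀, hD₀, hAD₀, hA'D₁.trans h⟩
      obtain ⟨C, hCB, hCne, hCchain, rfl⟩ := hDcu hD
      obtain ⟨E, hE, hAE⟩ := hreg C hCB hCne hCchain A hAB hAD
      obtain ⟨E', hE', hA'E'⟩ := hreg C hCB hCne hCchain A' hA'B hA'D
      rcases hCchain.total hE hE' with h | h
      · exact ⟨E', ⟨hCB hE', ⋃₀ C, hD, subset_sUnion_of_mem hE'⟩,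
          hAE.trans h, hA'E'⟩
      · exact ⟨E, ⟨hCB hE, ⋃₀ C, hD, subset_sUnion_of_mem hE⟩,
          hAE, hA'E'.trans h⟩
    -- fix a base ball B₀ ∈ S and take the cofinal subfamily above it
    obtain ⟨B₀, hB₀⟩ := hSne
    obtain ⟨x₀, hx₀⟩ : B₀.Nonempty := hball.2 B₀ (hSB hB₀)
    set S₀ : Set (Set X) := {C | C ∈ S ∧ B₀ ⊆ C} with hS₀def
    have hS₀S : S₀ ⊆ S := fun C hC => hC.1
    have hS₀ne : S₀.Nonempty := ⟨B₀, hB₀, subset_rfl⟩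
    -- S₀ is countable: δ is injective on S₀ with countable image
    have hS₀c : S₀.Countable := by
      have hmaps : MapsTo δ S₀ (insert (δ B₀) {x : Γ | δ B₀ < x}) := by
        rintro C ⟨hCS, hB₀C⟩
        have hle : δ B₀ ≤ δ C := hδ.1 B₀ (hSB hB₀) C (hSB hCS) hB₀C
        rcases hle.lt_or_eq with h | h
        · exact Or.inr h
        · exact Or.inl h.symm
      have hinj : InjOn δ S₀ := by
        rintro C ⟨hCS, hB₀C⟩ C' ⟨hC'S, hB₀C'⟩ h
        have hx : (C ∩ C').Nonempty := ⟨x₀, hB₀C hx₀, hB₀C' hx₀⟩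
        have hx' : (C' ∩ C).Nonempty := ⟨x₀, hB₀C' hx₀, hB₀C hx₀⟩
        exact subset_antisymm
          (hδ.2 C (hSB hCS) C' (hSB hC'S) h.le hx)
          (hδ.2 C' (hSB hC'S) C (hSB hCS) h.ge hx')
      exact hmaps.countable_of_injOn hinj ((hup (δ B₀)).insert _)
    -- S₀ is cofinal in S, hence has the same union
    have hcof : ∀ A ∈ S, ∃ C ∈ S₀, A ⊆ C := by
      intro A hA
      obtain ⟨C, hC, hAC, hB₀C⟩ := hdir A hA B₀ hB₀
      exact ⟨C, ⟨hC, hB₀C⟩, hAC⟩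
    have hS₀U : ⋃₀ S₀ = ⋃₀ S := by
      apply subset_antisymm (sUnion_subset fun C hC => subset_sUnion_of_mem (hS₀S hC))
      apply sUnion_subset
      intro A hA
      obtain ⟨C, hC, hAC⟩ := hcof A hA
      exact hAC.trans (subset_sUnion_of_mem hC)
    -- S₀ is directed
    have hdir₀ : ∀ A ∈ S₀, ∀ A' ∈ S₀, ∃ C ∈ S₀, A ⊆ C ∧ A' ⊆ C := by
      rintro A ⟨hAS, hB₀A⟩ A' ⟨hA'S, _⟩
      obtain ⟨C, hC, hAC, hA'C⟩ := hdir A hAS A' hA'S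
      exact ⟨C, ⟨hC, hB₀A.trans hAC⟩, hAC, hA'C⟩
    -- extract a countable cofinal chain
    obtain ⟨C, hCS₀, hCne, hCchain, hCU⟩ :=
      exists_chain_of_countable_directed S₀ hS₀c hS₀ne hdir₀
    exact ⟨C, fun A hA => hSB (hS₀S (hCS₀ hA)), hCne, hCchain,
      by rw [hCU, hS₀U, hSU]⟩
  · intro U hU
    exact ⟨{U}, singleton_subset_iff.mpr hU, singleton_nonempty U,
      Set.Subsingleton.isChain (subsingleton_singleton), (sUnion_singleton U).symm⟩
end

section
/- Let (X, 𝓑) be a ball space admitting an ultradiameter δ : 𝓑 → Γ with values in a countable narrow partially ordered set Γ. Then (X, 𝓑) is chain union stable. -/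
open Set

namespace BallAux

variable {α : Type*} [PartialOrder α]

/-- Two elements are compatible in `S` if they have a common upper bound in `S`. -/
def Compat (S : Set α) (a b : α) : Prop := ∃ c ∈ S, a ≤ c ∧ b ≤ c

lemma compat_self {S : Set α} {a : α} (ha : a ∈ S) : Compat S a a := ⟨a, ha, le_rfl, le_rfl⟩

lemma compat_symm {S : Set α} {a b : α} (h : Compat S a b) : Compat S b a := by
  obtain ⟨c, hc, h1, h2⟩ := h; exact ⟨c, hc, h2, h1⟩

lemma compat_down {S : Set α} {a p q : α} (h : Compat S a q) (hpq : p ≤ q) : Compat S a p := by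
  obtain ⟨c, hc, h1, h2⟩ := h; exact ⟨c, hc, h1, le_trans hpq h2⟩

/-- Pairwise incompatible subsets. -/
def PwI (S A : Set α) : Prop := A.Pairwise (fun a b => ¬ Compat S a b)

/-- `T` contains arbitrarily large finite strong antichains (w.r.t. compatibility in `S`). -/
def LargeIn (S T : Set α) : Prop :=
  ∀ n : ℕ, ∃ A : Finset α, ↑A ⊆ T ∧ PwI S ↑A ∧ n ≤ A.card

/-- upper cone of `p` within `S`. -/
def cone (S : Set α) (p : α) : Set α := {q | q ∈ S ∧ p ≤ q}

lemma cone_subset {S : Set α} {p : α} : cone S p ⊆ S := fun _ h => h.1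

lemma mem_cone_trans {S : Set α} {p q r : α} (h1 : q ∈ cone S p) (h2 : r ∈ cone S q) :
    r ∈ cone S p := ⟨h2.1, le_trans h1.2 h2.2⟩

lemma not_large {S T : Set α} (h : ¬ LargeIn S T) :
    ∃ n : ℕ, ∀ A : Finset α, ↑A ⊆ T → PwI S ↑A → A.card ≤ n := by
  unfold LargeIn at h
  push_neg at h
  obtain ⟨n, hn⟩ := h
  exact ⟨n, fun A hA hpw => le_of_lt (hn A hA hpw)⟩

lemma count_compat {S : Set α} {s : α} {n : ℕ} [DecidablePred (fun a => Compat S a s)]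
    (hs : ∀ A : Finset α, ↑A ⊆ cone S s → PwI S ↑A → A.card ≤ n)
    (A : Finset α) (hA : ↑A ⊆ S) (hpw : PwI S ↑A) :
    (A.filter (fun a => Compat S a s)).card ≤ n := by
  classical
  set f : α → α := fun a => if h : Compat S a s then h.choose else a with hf
  have hfspec : ∀ a, (h : Compat S a s) → f a ∈ S ∧ a ≤ f a ∧ s ≤ f a := by
    intro a ha
    have h2 := ha.choose_spec
    simp only [hf, dif_pos ha]
    exact ⟨h2.1, h2.2.1, h2.2.2⟩
  set Af := A.filter (fun a => Compat S a s) with hAf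
  have hmemf : ∀ a ∈ Af, Compat S a s := fun a ha => (Finset.mem_filter.mp ha).2
  have hmemA : ∀ a ∈ Af, a ∈ A := fun a ha => (Finset.mem_filter.mp ha).1
  have hinj : Set.InjOn f ↑Af := by
    intro a ha b hb hab
    by_contra hne
    have hca := hfspec a (hmemf a ha)
    have hcb := hfspec b (hmemf b hb)
    have : Compat S a b := ⟨f a, hca.1, hca.2.1, hab ▸ hcb.2.1⟩
    exact hpw (hmemA a ha) (hmemA b hb) hne this
  have hcard : Af.card = (Af.image f).card := (Finset.card_image_of_injOn hinj).symm
  rw [hcard]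
  apply hs
  · intro y hy
    simp only [Finset.coe_image, Set.mem_image] at hy
    obtain ⟨a, ha, rfl⟩ := hy
    have hca := hfspec a (hmemf a ha)
    exact ⟨hca.1, hca.2.2⟩
  · intro u hu v hv huv
    simp only [Finset.coe_image, Set.mem_image] at hu hv
    obtain ⟨a, ha, rfl⟩ := hu
    obtain ⟨b, hb, rfl⟩ := hv
    have hne : a ≠ b := fun h => huv (by rw [h])
    have hca := hfspec a (hmemf a ha)
    have hcb := hfspec b (hmemf b hb)
    intro ⟨c, hcS, h1, h2⟩
    exact hpw (hmemA a ha) (hmemA b hb) hne ⟨c, hcS, le_trans hca.2.1 h1, le_trans hcb.2.1 h2⟩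

lemma counting_case {S T : Set α} (hTS : T ⊆ S) (hL : LargeIn S T)
    (hfail : ∀ a ∈ T, ∀ p ∈ T, ¬ Compat S a p → ¬ LargeIn S (cone S p)) :
    ∃ A : Set α, A ⊆ S ∧ PwI S A ∧ A.Infinite := by
  classical
  -- a bound for small cones
  have hex : ∀ s : α, ∃ n : ℕ, ¬ LargeIn S (cone S s) →
      ∀ A : Finset α, ↑A ⊆ cone S s → PwI S ↑A → A.card ≤ n := by
    intro s
    by_cases h : LargeIn S (cone S s)
    · exact ⟨0, fun h' => absurd h h'⟩
    · obtain ⟨n, hn⟩ := not_large h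
      exact ⟨n, fun _ => hn⟩
  choose sb hsb using hex
  -- the one-step extension
  have step : ∀ L : Finset α, ↑L ⊆ T → PwI S ↑L → (∀ s ∈ L, ¬ LargeIn S (cone S s)) →
      ∃ r, r ∈ T ∧ r ∉ L ∧ ¬ LargeIn S (cone S r) ∧ ∀ s ∈ L, ¬ Compat S r s := by
    intro L hLT hLpw hLsm
    obtain ⟨A, hAT, hApw, hAcard⟩ := hL (∑ s ∈ L, sb s + 2)
    have hAS : ↑A ⊆ S := fun a ha => hTS (hAT ha)
    set Ac := A.filter (fun a => ∃ s ∈ L, Compat S a s) with hAc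
    have h1 : Ac.card ≤ ∑ s ∈ L, sb s := by
      have hsub : Ac ⊆ L.biUnion (fun s => A.filter (fun a => Compat S a s)) := by
        intro a ha
        obtain ⟨haA, s, hsL, hcs⟩ := Finset.mem_filter.mp ha |>.imp id (fun h => h)
        · exact Finset.mem_biUnion.mpr ⟨s, hsL, Finset.mem_filter.mpr ⟨haA, hcs⟩⟩
      calc Ac.card ≤ (L.biUnion (fun s => A.filter (fun a => Compat S a s))).card :=
            Finset.card_le_card hsub
        _ ≤ ∑ s ∈ L, (A.filter (fun a => Compat S a s)).card := Finset.card_biUnion_le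
        _ ≤ ∑ s ∈ L, sb s := by
            apply Finset.sum_le_sum
            intro s hs
            exact count_compat (hsb s (hLsm s hs)) A hAS hApw
    have h2 : 1 < (A \ Ac).card := by
      have hsd : (A \ Ac).card = A.card - Ac.card := Finset.card_sdiff_of_subset (Finset.filter_subset _ _)
      omega
    obtain ⟨r, hr, r', hr', hrr'⟩ := Finset.one_lt_card.mp h2
    have hrA : r ∈ A := (Finset.mem_sdiff.mp hr).1
    have hrnc : ¬ ∃ s ∈ L, Compat S r s := by
      intro hc
      exact (Finset.mem_sdiff.mp hr).2 (Finset.mem_filter.mpr ⟨hrA, hc⟩)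
    have hr'A : r' ∈ A := (Finset.mem_sdiff.mp hr').1
    have hr'nc : ¬ ∃ s ∈ L, Compat S r' s := by
      intro hc
      exact (Finset.mem_sdiff.mp hr').2 (Finset.mem_filter.mpr ⟨hr'A, hc⟩)
    have hrT : r ∈ T := hAT hrA
    have hr'T : r' ∈ T := hAT hr'A
    have hinc : ¬ Compat S r r' := hApw hrA hr'A hrr'
    refine ⟨r, hrT, ?_, ?_, ?_⟩
    · intro hrL
      exact hrnc ⟨r, hrL, compat_self (hTS hrT)⟩
    · exact hfail r' hr'T r hrT (fun h => hinc (compat_symm h))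
    · intro s hs hc
      exact hrnc ⟨s, hs, hc⟩
  -- iterate using a subtype state
  let Inv : Finset α → Prop := fun L => ↑L ⊆ T ∧ PwI S ↑L ∧ ∀ s ∈ L, ¬ LargeIn S (cone S s)
  have hInv0 : Inv (∅ : Finset α) := by
    refine ⟨by simp, by simp [PwI], by simp⟩
  have stepS : ∀ st : {L : Finset α // Inv L},
      ∃ st' : {L : Finset α // Inv L}, st.1 ⊆ st'.1 ∧ st.1.card < st'.1.card := by
    rintro ⟨L, hLT, hLpw, hLsm⟩
    obtain ⟨r, hrT, hrL, hrsm, hrinc⟩ := step L hLT hLpw hLsm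
    refine ⟨⟨insert r L, ?_, ?_, ?_⟩, ?_, ?_⟩
    · intro a ha
      simp only [Finset.coe_insert, Set.mem_insert_iff] at ha
      rcases ha with rfl | ha
      · exact hrT
      · exact hLT ha
    · have hsymm : Symmetric (fun a b : α => ¬ Compat S a b) :=
        fun a b h hc => h (compat_symm hc)
      rw [Finset.coe_insert]
      unfold PwI
      rw [haveI := @Std.Symm.mk _ (fun p q => ¬ BallAux.Compat _ p q) (fun p q h => hsymm h); Set.pairwise_insert_of_symm]
      exact ⟨hLpw, fun s hs _ => hrinc s hs⟩
    · intro s hs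
      rcases Finset.mem_insert.mp hs with rfl | hs
      · exact hrsm
      · exact hLsm s hs
    · exact Finset.subset_insert _ _
    · simp [Finset.card_insert_of_notMem hrL]
  choose next hnext1 hnext2 using stepS
  let seq : ℕ → {L : Finset α // Inv L} := fun n => Nat.rec ⟨∅, hInv0⟩ (fun _ st => next st) n
  have hseq : ∀ n, (seq n).1 ⊆ (seq (n+1)).1 ∧ (seq n).1.card < (seq (n+1)).1.card :=
    fun n => ⟨hnext1 (seq n), hnext2 (seq n)⟩
  have hmono : ∀ n m, n ≤ m → (seq n).1 ⊆ (seq m).1 := by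
    intro n m h
    induction m with
    | zero => simp_all
    | succ k ih =>
      rcases Nat.lt_or_ge n (k+1) with h' | h'
      · exact (ih (by omega)).trans (hseq k).1
      · have : n = k + 1 := by omega
        subst this; exact subset_rfl
  have hcard : ∀ n, n ≤ (seq n).1.card := by
    intro n
    induction n with
    | zero => omega
    | succ k ih => have := (hseq k).2; omega
  refine ⟨⋃ n, ↑(seq n).1, ?_, ?_, ?_⟩
  · intro a ha
    obtain ⟨n, hn⟩ := Set.mem_iUnion.mp ha
    exact hTS ((seq n).2.1 hn)
  · intro a ha b hb hne
    obtain ⟨n, hn⟩ := Set.mem_iUnion.mp ha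
    obtain ⟨m, hm⟩ := Set.mem_iUnion.mp hb
    have han : a ∈ (seq (max n m)).1 := hmono n _ (le_max_left _ _) hn
    have hbm : b ∈ (seq (max n m)).1 := hmono m _ (le_max_right _ _) hm
    exact (seq (max n m)).2.2.1 han hbm hne
  · intro hfin
    have hsub : ∀ n, (seq n).1 ⊆ hfin.toFinset := by
      intro n a ha
      rw [Set.Finite.mem_toFinset]
      exact Set.mem_iUnion.mpr ⟨n, ha⟩
    have h1 := Finset.card_le_card (hsub (hfin.toFinset.card + 1))
    have h2 := hcard (hfin.toFinset.card + 1)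
    omega

lemma tree_case {S : Set α} {a₀ p₀ : α} (ha₀ : a₀ ∈ S) (hp₀ : p₀ ∈ S)
    (hi₀ : ¬ Compat S a₀ p₀) (hL₀ : LargeIn S (cone S p₀))
    (hC : ∀ p ∈ S, LargeIn S (cone S p) →
      ∃ a ∈ cone S p, ∃ q ∈ cone S p, ¬ Compat S a q ∧ LargeIn S (cone S q)) :
    ∃ A : Set α, A ⊆ S ∧ PwI S A ∧ A.Infinite := by
  classical
  let St := {p : α // p ∈ S ∧ LargeIn S (cone S p)}
  have step : ∀ st : St, ∃ pr : α × St,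
      pr.1 ∈ cone S st.1 ∧ pr.2.1 ∈ cone S st.1 ∧ ¬ Compat S pr.1 pr.2.1 := by
    rintro ⟨p, hpS, hpL⟩
    obtain ⟨a, haC, q, hqC, hinc, hqL⟩ := hC p hpS hpL
    exact ⟨(a, ⟨q, hqC.1, hqL⟩), haC, hqC, hinc⟩
  choose pick hpick1 hpick2 hpick3 using step
  let seq : ℕ → St := fun n => Nat.rec ⟨p₀, hp₀, hL₀⟩ (fun _ st => (pick st).2) n
  let g : ℕ → α := fun n => Nat.casesOn n a₀ (fun m => (pick (seq m)).1)
  have hg_inc : ∀ n, ¬ Compat S (g n) ((seq n).1) := by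
    intro n
    cases n with
    | zero => exact hi₀
    | succ m => exact hpick3 (seq m)
  have hgS : ∀ n, g n ∈ S := by
    intro n
    cases n with
    | zero => exact ha₀
    | succ m => exact (hpick1 (seq m)).1
  have hmono : ∀ n m, n ≤ m → (seq m).1 ∈ cone S ((seq n).1) := by
    intro n m h
    induction m with
    | zero =>
      have : n = 0 := by omega
      subst this
      exact ⟨(seq 0).2.1, le_rfl⟩
    | succ k ih =>
      rcases Nat.lt_or_ge n (k+1) with h' | h'
      · exact mem_cone_trans (ih (by omega)) (hpick2 (seq k))
      · have : n = k + 1 := by omega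
        subst this
        exact ⟨(seq (k+1)).2.1, le_rfl⟩
  have hglt : ∀ n m, n < m → ¬ Compat S (g n) (g m) := by
    intro n m h hc
    have h1 : g m ∈ cone S ((seq (m-1)).1) := by
      have : m = (m-1) + 1 := by omega
      rw [this]
      exact hpick1 (seq (m-1))
    have h2 : (seq (m-1)).1 ∈ cone S ((seq n).1) := hmono n (m-1) (by omega)
    have h3 : (seq n).1 ≤ g m := le_trans h2.2 h1.2
    exact hg_inc n (compat_down hc h3)
  have hginj : Function.Injective g := by
    intro n m h
    by_contra hne
    rcases Nat.lt_or_ge n m with h' | h'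
    · exact hglt n m h' (by rw [h]; exact compat_self (hgS m))
    · have h'' : m < n := by omega
      exact hglt m n h'' (by rw [← h]; exact compat_self (hgS n))
  refine ⟨Set.range g, ?_, ?_, Set.infinite_range_of_injective hginj⟩
  · rintro a ⟨n, rfl⟩
    exact hgS n
  · rintro a ⟨n, rfl⟩ b ⟨m, rfl⟩ hne
    rcases Nat.lt_or_ge n m with h | h
    · exact hglt n m h
    · have h' : m < n := by
        rcases Nat.lt_or_ge m n with h' | h'
        · exact h'
        · exact absurd (Nat.le_antisymm h h') (fun hh => hne (by rw [hh]))
      exact fun hc => hglt m n h' (compat_symm hc)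

lemma ET {S : Set α}
    (hnar : ∀ A : Set α, A ⊆ S → PwI S A → A.Finite) :
    ∃ n : ℕ, ∀ A : Finset α, ↑A ⊆ S → PwI S ↑A → A.card ≤ n := by
  by_contra hcon
  push_neg at hcon
  have hLS : LargeIn S S := by
    intro n
    obtain ⟨A, h1, h2, h3⟩ := hcon n
    exact ⟨A, h1, h2, le_of_lt h3⟩
  have hmain : ∃ A : Set α, A ⊆ S ∧ PwI S A ∧ A.Infinite := by
    by_cases hS : ∃ a ∈ S, ∃ p ∈ S, ¬ Compat S a p ∧ LargeIn S (cone S p)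
    · obtain ⟨a₀, ha₀, p₀, hp₀, hi₀, hL₀⟩ := hS
      by_cases hC : ∀ p ∈ S, LargeIn S (cone S p) →
          ∃ a ∈ cone S p, ∃ q ∈ cone S p, ¬ Compat S a q ∧ LargeIn S (cone S q)
      · exact tree_case ha₀ hp₀ hi₀ hL₀ hC
      · push_neg at hC
        obtain ⟨p, hpS, hpL, hfail⟩ := hC
        exact counting_case cone_subset hpL hfail
    · push_neg at hS
      exact counting_case subset_rfl hLS hS
  obtain ⟨A, h1, h2, h3⟩ := hmain
  exact h3 (hnar A h1 h2)


lemma chain_bound {X : Type*} {G : Set (Set X)} (hG : IsChain (· ⊆ ·) G)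
    {β : Type*} (F : Finset β) (f : β → Set X) :
    F.Nonempty → (∀ i ∈ F, f i ∈ G) → ∃ m ∈ G, ∀ i ∈ F, f i ⊆ m := by
  classical
  induction F using Finset.induction_on with
  | empty => intro h _; simp at h
  | @insert x F' hx ih =>
    intro _ hf
    have hfx : f x ∈ G := hf x (Finset.mem_insert_self _ _)
    by_cases hF' : F'.Nonempty
    · obtain ⟨m, hmG, hm⟩ := ih hF' (fun i hi => hf i (Finset.mem_insert_of_mem hi))
      rcases eq_or_ne (f x) m with h | h
      · refine ⟨m, hmG, fun i hi => ?_⟩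
        rcases Finset.mem_insert.mp hi with rfl | hi
        · rw [h]
        · exact hm i hi
      · rcases hG hfx hmG h with h1 | h1
        · refine ⟨m, hmG, fun i hi => ?_⟩
          rcases Finset.mem_insert.mp hi with rfl | hi
          · exact h1
          · exact hm i hi
        · refine ⟨f x, hfx, fun i hi => ?_⟩
          rcases Finset.mem_insert.mp hi with rfl | hi
          · exact subset_rfl
          · exact (hm i hi).trans h1
    · have hF'e : F' = ∅ := Finset.not_nonempty_iff_eq_empty.mp hF'
      subst hF'e
      refine ⟨f x, hfx, fun i hi => ?_⟩
      rcases Finset.mem_insert.mp hi with rfl | hi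
      · exact subset_rfl
      · simp at hi

end BallAux

/-- Theorem 5.2: a ball space admitting an ultradiameter with values in a countable narrow
poset is chain union stable. -/
theorem ultradiameter_countable_narrow_chainUnionStable {X Γ : Type*} [Nonempty X]
    [PartialOrder Γ] [Countable Γ] (hnarrow : IsNarrow Γ)
    (B : Set (Set X)) (hball : IsBallSpace B)
    (δ : Set X → Γ) (hδ : IsUltradiameter B δ) :
    ChainUnionStable B := by
  classical
  unfold ChainUnionStable ChainUnionClosed
  apply Set.Subset.antisymm
  · rintro U ⟨𝒟, hDsub, hDne, hDch, rfl⟩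
    obtain ⟨D₀, hD₀⟩ := hDne
    obtain ⟨C₀, hC₀B, ⟨c₀, hc₀⟩, hC₀ch, hC₀u⟩ := hDsub hD₀
    obtain ⟨x, hx⟩ := hball.2 c₀ (hC₀B hc₀)
    have hxD₀ : x ∈ D₀ := by rw [hC₀u]; exact ⟨c₀, hc₀, hx⟩
    set Dx : Set (Set X) := {D | D ∈ 𝒟 ∧ x ∈ D} with hDxdef
    have hD₀x : D₀ ∈ Dx := ⟨hD₀, hxD₀⟩
    have hDxch : IsChain (· ⊆ ·) Dx := fun A hA B' hB' hne => hDch hA.1 hB'.1 hne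
    have cofin : ∀ D ∈ 𝒟, ∃ D', D' ∈ Dx ∧ D ⊆ D' := by
      intro D hD
      rcases eq_or_ne D D₀ with rfl | hne
      · exact ⟨D, ⟨hD, hxD₀⟩, subset_rfl⟩
      · rcases hDch hD hD₀ hne with h | h
        · exact ⟨D₀, hD₀x, h⟩
        · exact ⟨D, ⟨hD, h hxD₀⟩, subset_rfl⟩
    set E : Set (Set X) := {b | b ∈ B ∧ x ∈ b ∧ ∃ D, D ∈ Dx ∧ b ⊆ D} with hEdef
    have hEB : E ⊆ B := fun b hb => hb.1
    have chainE : ∀ D ∈ Dx, ∃ G : Set (Set X),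
        G ⊆ E ∧ G.Nonempty ∧ IsChain (· ⊆ ·) G ∧ ⋃₀ G = D := by
      intro D hD
      obtain ⟨C, hCB, hCne, hCch, hCu⟩ := hDsub hD.1
      have hxC : ∃ c ∈ C, x ∈ c := by
        have h2 := hD.2
        rw [hCu] at h2
        exact h2
      refine ⟨{b | b ∈ C ∧ x ∈ b}, ?_, ?_, ?_, ?_⟩
      · intro b hb
        refine ⟨hCB hb.1, hb.2, D, hD, ?_⟩
        rw [hCu]
        exact fun y hy => ⟨b, hb.1, hy⟩
      · obtain ⟨c, hc, hxc⟩ := hxC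
        exact ⟨c, hc, hxc⟩
      · exact fun p hp q hq hne => hCch hp.1 hq.1 hne
      · apply Set.Subset.antisymm
        · rintro y ⟨b, hb, hyb⟩
          rw [hCu]
          exact ⟨b, hb.1, hyb⟩
        · intro y hy
          rw [hCu] at hy
          obtain ⟨cy, hcy, hycy⟩ := hy
          obtain ⟨cx, hcx, hxcx⟩ := hxC
          rcases eq_or_ne cy cx with rfl | hne
          · exact ⟨cy, ⟨hcy, hxcx⟩, hycy⟩
          · rcases hCch hcy hcx hne with h | h
            · exact ⟨cx, ⟨hcx, hxcx⟩, h hycy⟩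
            · exact ⟨cy, ⟨hcy, h hxcx⟩, hycy⟩
    have key : ∀ b ∈ E, ∀ b' ∈ E, δ b ≤ δ b' → b ⊆ b' := by
      intro b hb b' hb' hle
      exact hδ.2 b hb.1 b' hb'.1 hle ⟨x, hb.2.1, hb'.2.1⟩
    have injE : ∀ b ∈ E, ∀ b' ∈ E, δ b = δ b' → b = b' := by
      intro b hb b' hb' h
      exact Set.Subset.antisymm (key b hb b' hb' h.le) (key b' hb' b hb h.ge)
    have narrowE : ∀ A : Set (Set X), A ⊆ E → BallAux.PwI E A → A.Finite := by
      intro A hAE hApw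
      have hinj : Set.InjOn δ A := fun p hp q hq h => injE p (hAE hp) q (hAE hq) h
      apply Set.Finite.of_finite_image _ hinj
      apply hnarrow
      rintro γ₁ ⟨p, hp, rfl⟩ γ₂ ⟨q, hq, rfl⟩ hne
      have hpq : p ≠ q := fun h => hne (by rw [h])
      constructor
      · intro hle
        exact hApw hp hq hpq ⟨q, hAE hq, key p (hAE hp) q (hAE hq) hle, le_rfl⟩
      · intro hle
        exact hApw hp hq hpq ⟨p, hAE hp, le_rfl, key q (hAE hq) p (hAE hp) hle⟩
    obtain ⟨N, hN⟩ := BallAux.ET narrowE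
    obtain ⟨G₀, hG₀E, ⟨b₀, hb₀⟩, hG₀ch, hG₀u⟩ := chainE D₀ hD₀x
    have hb₀E : b₀ ∈ E := hG₀E hb₀
    set P : ℕ → Prop := fun k => ∃ A : Finset (Set X), ↑A ⊆ E ∧ BallAux.PwI E ↑A ∧ A.card = k
      with hPdef
    have hP1 : P 1 := by
      refine ⟨{b₀}, by simpa using hb₀E, ?_, Finset.card_singleton _⟩
      simp [BallAux.PwI]
    have h1N : 1 ≤ N := by
      obtain ⟨A, hAE, hApw, hAc⟩ := hP1
      have := hN A hAE hApw
      omega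
    set k := Nat.findGreatest P N with hkdef
    have hPk : P k := Nat.findGreatest_spec h1N hP1
    have hmax : ∀ A : Finset (Set X), ↑A ⊆ E → BallAux.PwI E ↑A → A.card ≤ k := by
      intro A hAE hApw
      exact Nat.le_findGreatest (hN A hAE hApw) ⟨A, hAE, hApw, rfl⟩
    have hk1 : 1 ≤ k := Nat.le_findGreatest h1N hP1
    obtain ⟨Am, hAmE, hAmpw, hAmcard⟩ := hPk
    have hsymm : Symmetric (fun p q : Set X => ¬ BallAux.Compat E p q) :=
      fun p q h hc => h (BallAux.compat_symm hc)
    have cover : ∀ b ∈ E, ∃ a ∈ Am, BallAux.Compat E b a := by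
      intro b hbE
      by_contra hcon
      push_neg at hcon
      have hbA : b ∉ Am := fun h => hcon b h (BallAux.compat_self hbE)
      have hle : (insert b Am).card ≤ k := by
        apply hmax
        · rw [Finset.coe_insert]
          exact Set.insert_subset_iff.mpr ⟨hbE, hAmE⟩
        · rw [Finset.coe_insert]
          unfold BallAux.PwI
          rw [haveI := @Std.Symm.mk _ (fun p q => ¬ BallAux.Compat _ p q) (fun p q h => hsymm h); Set.pairwise_insert_of_symm]
          exact ⟨hAmpw, fun p hp _ => hcon p (Finset.mem_coe.mp hp)⟩
      rw [Finset.card_insert_of_notMem hbA, hAmcard] at hle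
      omega
    set F : Set X → Set (Set X) := fun a => {p | p ∈ E ∧ BallAux.Compat E p a} with hFdef
    have directed : ∀ a ∈ Am, ∀ p ∈ F a, ∀ p' ∈ F a, ∃ r ∈ F a, p ⊆ r ∧ p' ⊆ r := by
      intro a haA p hp p' hp'
      obtain ⟨q, hqE, hpq, haq⟩ := hp.2
      obtain ⟨q', hq'E, hpq', haq'⟩ := hp'.2
      have hqq' : BallAux.Compat E q q' := by
        by_contra hno
        have hqne : q ≠ q' := fun h => hno (h ▸ BallAux.compat_self hqE)
        have hqa' : ∀ a' ∈ Am, a' ≠ a → ¬ BallAux.Compat E q a' := by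
          rintro a' ha' hne ⟨c, hcE, hqc, ha'c⟩
          exact hAmpw (Finset.mem_coe.mpr ha') (Finset.mem_coe.mpr haA) hne
            ⟨c, hcE, ha'c, le_trans haq hqc⟩
        have hq'a' : ∀ a' ∈ Am, a' ≠ a → ¬ BallAux.Compat E q' a' := by
          rintro a' ha' hne ⟨c, hcE, hq'c, ha'c⟩
          exact hAmpw (Finset.mem_coe.mpr ha') (Finset.mem_coe.mpr haA) hne
            ⟨c, hcE, ha'c, le_trans haq' hq'c⟩
        have hq'er : q' ∉ Am.erase a := by
          intro h
          obtain ⟨hne, hmem⟩ := Finset.mem_erase.mp h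
          exact hq'a' q' hmem hne (BallAux.compat_self hq'E)
        have hqer : q ∉ Am.erase a := by
          intro h
          obtain ⟨hne, hmem⟩ := Finset.mem_erase.mp h
          exact hqa' q hmem hne (BallAux.compat_self hqE)
        have hqins : q ∉ insert q' (Am.erase a) := by
          intro h
          rcases Finset.mem_insert.mp h with h | h
          · exact hqne h
          · exact hqer h
        have pw1 : BallAux.PwI E ↑(Am.erase a) :=
          hAmpw.mono (Finset.coe_subset.mpr (Finset.erase_subset _ _))
        have pw2 : BallAux.PwI E ↑(insert q' (Am.erase a)) := by
          rw [Finset.coe_insert]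
          unfold BallAux.PwI
          rw [haveI := @Std.Symm.mk _ (fun p q => ¬ BallAux.Compat _ p q) (fun p q h => hsymm h); Set.pairwise_insert_of_symm]
          refine ⟨pw1, ?_⟩
          intro b hb _
          obtain ⟨hbne, hbm⟩ := Finset.mem_erase.mp (Finset.mem_coe.mp hb)
          exact hq'a' b hbm hbne
        have pw3 : BallAux.PwI E ↑(insert q (insert q' (Am.erase a))) := by
          rw [Finset.coe_insert]
          unfold BallAux.PwI
          rw [haveI := @Std.Symm.mk _ (fun p q => ¬ BallAux.Compat _ p q) (fun p q h => hsymm h); Set.pairwise_insert_of_symm]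
          refine ⟨pw2, ?_⟩
          intro b hb _
          rcases Finset.mem_insert.mp (Finset.mem_coe.mp hb) with rfl | hbm
          · exact hno
          · obtain ⟨hbne, hbm'⟩ := Finset.mem_erase.mp hbm
            exact hqa' b hbm' hbne
        have hsubE : ↑(insert q (insert q' (Am.erase a))) ⊆ E := by
          intro b hb
          rcases Finset.mem_insert.mp (Finset.mem_coe.mp hb) with rfl | hb
          · exact hqE
          · rcases Finset.mem_insert.mp hb with rfl | hb
            · exact hq'E
            · exact hAmE (Finset.mem_coe.mpr (Finset.mem_of_mem_erase hb))
        have hcard := hmax _ hsubE pw3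
        rw [Finset.card_insert_of_notMem hqins, Finset.card_insert_of_notMem hq'er,
          Finset.card_erase_of_mem haA, hAmcard] at hcard
        omega
      obtain ⟨r, hrE, hqr, hq'r⟩ := hqq'
      exact ⟨r, ⟨hrE, ⟨r, hrE, le_rfl, le_trans haq hqr⟩⟩,
        le_trans hpq hqr, le_trans hpq' hq'r⟩
    have hAne : Am.Nonempty := Finset.card_pos.mp (by omega)
    have coverD : ∀ D ∈ Dx, ∃ a ∈ Am, D ⊆ ⋃₀ (F a) := by
      intro D hD
      obtain ⟨G, hGE, hGne, hGch, hGu⟩ := chainE D hD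
      have main : ∃ a ∈ Am, ∀ g ∈ G, ∃ g', g' ∈ G ∧ g' ∈ F a ∧ g ⊆ g' := by
        by_contra hcon
        push_neg at hcon
        choose gf hgf1 hgf2 using hcon
        obtain ⟨m, hmG, hm⟩ := BallAux.chain_bound hGch Am.attach
          (fun i => gf i.1 i.2) (Finset.attach_nonempty_iff.mpr hAne)
          (fun i _ => hgf1 i.1 i.2)
        have hmE : m ∈ E := hGE hmG
        obtain ⟨a₀, ha₀, hc⟩ := cover m hmE
        exact hgf2 a₀ ha₀ m hmG ⟨hmE, hc⟩ (hm ⟨a₀, ha₀⟩ (Finset.mem_attach _ _))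
      obtain ⟨a, haA, hmain⟩ := main
      refine ⟨a, haA, ?_⟩
      intro y hy
      rw [← hGu] at hy
      obtain ⟨g, hgG, hyg⟩ := hy
      obtain ⟨g', hg'G, hg'F, hgg'⟩ := hmain g hgG
      exact ⟨g', hg'F, hgg' hyg⟩
    have cofinalS : ∃ a ∈ Am, ∀ D ∈ Dx, ∃ D', (D' ∈ Dx ∧ D' ⊆ ⋃₀ (F a)) ∧ D ⊆ D' := by
      by_contra hcon
      push_neg at hcon
      choose Df hDf1 hDf2 using hcon
      obtain ⟨Dm, hDmDx, hDm⟩ := BallAux.chain_bound hDxch Am.attach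
        (fun i => Df i.1 i.2) (Finset.attach_nonempty_iff.mpr hAne)
        (fun i _ => hDf1 i.1 i.2)
      obtain ⟨a₀, ha₀, hsub⟩ := coverD Dm hDmDx
      exact hDf2 a₀ ha₀ Dm ⟨hDmDx, hsub⟩ (hDm ⟨a₀, ha₀⟩ (Finset.mem_attach _ _))
    obtain ⟨a, haA, hcofS⟩ := cofinalS
    have haE : a ∈ E := hAmE (Finset.mem_coe.mpr haA)
    have hUsub : ⋃₀ 𝒟 ⊆ ⋃₀ (F a) := by
      rintro y ⟨D, hD, hyD⟩
      obtain ⟨D', hD', hDD'⟩ := cofin D hD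
      obtain ⟨D'', ⟨hD''x, hD''s⟩, hsub2⟩ := hcofS D' hD'
      exact hD''s (hsub2 (hDD' hyD))
    have hFsubU : ⋃₀ (F a) ⊆ ⋃₀ 𝒟 := by
      rintro y ⟨p, hp, hyp⟩
      obtain ⟨D, hDx', hpD⟩ := hp.1.2.2
      exact ⟨D, hDx'.1, hpD hyp⟩
    have hEc : E.Countable := by
      obtain ⟨f, hf⟩ := exists_injective_nat Γ
      rw [Set.countable_iff_exists_injective]
      exact ⟨fun b => f (δ b.1), fun b b' h =>
        Subtype.ext (injE b.1 b.2 b'.1 b'.2 (hf h))⟩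
    have hFc : (F a).Countable := hEc.mono (fun p hp => hp.1)
    have hFne : (F a).Nonempty := ⟨a, haE, BallAux.compat_self haE⟩
    obtain ⟨w, hw⟩ := hFc.exists_eq_range hFne
    have hwF : ∀ n, w n ∈ F a := fun n => by rw [hw]; exact ⟨n, rfl⟩
    have hstep : ∀ p q : {s : Set X // s ∈ F a},
        ∃ r : {s : Set X // s ∈ F a}, p.1 ⊆ r.1 ∧ q.1 ⊆ r.1 := by
      intro p q
      obtain ⟨r, hr, h1, h2⟩ := directed a haA p.1 p.2 q.1 q.2
      exact ⟨⟨r, hr⟩, h1, h2⟩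
    choose ub hub1 hub2 using hstep
    let e : ℕ → {s : Set X // s ∈ F a} := fun n => Nat.rec ⟨w 0, hwF 0⟩
      (fun m prev => ub prev ⟨w (m+1), hwF (m+1)⟩) n
    have hwsub : ∀ n, w n ⊆ (e n).1 := by
      intro n
      cases n with
      | zero => exact subset_rfl
      | succ m => exact hub2 (e m) ⟨w (m+1), hwF (m+1)⟩
    have hemono : ∀ n m, n ≤ m → (e n).1 ⊆ (e m).1 := by
      intro n m h
      induction m with
      | zero =>
        have hn0 : n = 0 := by omega
        subst hn0
        exact subset_rfl
      | succ kk ih =>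
        rcases Nat.lt_or_ge n (kk+1) with h' | h'
        · exact (ih (by omega)).trans (hub1 (e kk) ⟨w (kk+1), hwF (kk+1)⟩)
        · have hn : n = kk + 1 := by omega
          subst hn
          exact subset_rfl
    refine ⟨Set.range (fun n => (e n).1), ?_, ⟨(e 0).1, 0, rfl⟩, ?_, ?_⟩
    · rintro b ⟨n, rfl⟩
      exact hEB ((e n).2.1)
    · rintro b ⟨n, rfl⟩ c ⟨m, rfl⟩ hne
      rcases le_total n m with h | h
      · exact Or.inl (hemono n m h)
      · exact Or.inr (hemono m n h)
    · apply Set.Subset.antisymm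
      · intro y hy
        obtain ⟨p, hpF, hyp⟩ := hUsub hy
        rw [hw] at hpF
        obtain ⟨n, rfl⟩ := hpF
        exact ⟨(e n).1, ⟨n, rfl⟩, hwsub n hyp⟩
      · rintro y ⟨s, ⟨n, rfl⟩, hys⟩
        exact hFsubU ⟨(e n).1, (e n).2, hys⟩
  · intro U hU
    refine ⟨{U}, ?_, ⟨U, rfl⟩, ?_, ?_⟩
    · simpa using hU
    · intro p hp q hq hne
      simp only [Set.mem_singleton_iff] at hp hq
      exact absurd (hp.trans hq.symm) hne
    · simp
end
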